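/- arXiv:1710.03369 — 6 statements merged into one kernel-verified Lean document; each statement's English description precedes it below -/
import Mathlib

section
/- (Gluing Principle, part (i)) Let I ⊂ ℝ be a compact interval and let ω : [0,∞) → [0,∞) be continuous, monotone increasing and concave with ω(0) = 0 and ω(t) > 0 for t > 0. Let (I_k)_{k≥1} be a countable family of closed subintervals of I with pairwise disjoint interiors whose union is I, and let f : I → ℝ be continuous. Suppose that for each k there is a constant C_k ≥ 0 with |f(z) − f(w)| ≤ C_k·ω(|z − w|) for all z, w ∈ I_k, and that C = ∑_{k≥1} C_k < ∞. Then |f(x) − f(y)| ≤ C·ω(|x − y|) for all x, y ∈ I. -/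
open Set Filter Topology

/-- Gluing Principle, part (i).  Let `ω : [0,∞) → [0,∞)` be continuous, monotone
increasing and concave with `ω 0 = 0` and `ω t > 0` for `t > 0`.  Let `[A,B]` be a
compact interval covered by countably many closed subintervals `[u k, v k]` with
pairwise disjoint interiors, and let `f` be continuous on `[A,B]` with
`|f z - f w| ≤ C k * ω |z - w|` on each `[u k, v k]`.  If `∑ C k < ∞`, then
`|f x - f y| ≤ (∑' k, C k) * ω |x - y|` on `[A,B]`. -/
theorem gluing_principle_i (A B : ℝ) (hAB : A ≤ B) (ω : ℝ → ℝ)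
    (hω_cont : ContinuousOn ω (Ici 0)) (hω_mono : MonotoneOn ω (Ici 0))
    (hω_conc : ConcaveOn ℝ (Ici 0) ω) (hω0 : ω 0 = 0)
    (hω_pos : ∀ t > (0 : ℝ), 0 < ω t)
    (u v : ℕ → ℝ) (huv : ∀ k, u k ≤ v k)
    (hsub : ∀ k, Icc (u k) (v k) ⊆ Icc A B)
    (hdisj : ∀ j k, j ≠ k → Ioo (u j) (v j) ∩ Ioo (u k) (v k) = ∅)
    (hcover : Icc A B ⊆ ⋃ k, Icc (u k) (v k))
    (f : ℝ → ℝ) (hf : ContinuousOn f (Icc A B))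
    (C : ℕ → ℝ) (hC : ∀ k, 0 ≤ C k)
    (hfk : ∀ k, ∀ z ∈ Icc (u k) (v k), ∀ w ∈ Icc (u k) (v k),
      |f z - f w| ≤ C k * ω |z - w|)
    (hsum : Summable C) :
    ∀ x ∈ Icc A B, ∀ y ∈ Icc A B, |f x - f y| ≤ (∑' k, C k) * ω |x - y| := by
  have hωnn : ∀ t : ℝ, 0 ≤ t → 0 ≤ ω t := by
    intro t ht
    rw [← hω0]
    exact hω_mono Set.self_mem_Ici ht ht
  have hωmono' : ∀ s t : ℝ, 0 ≤ s → s ≤ t → ω s ≤ ω t := fun s t hs hst =>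
    hω_mono hs (hs.trans hst) hst
  have huAB : ∀ k, u k ∈ Icc A B := fun k => hsub k ⟨le_rfl, huv k⟩
  have hvAB : ∀ k, v k ∈ Icc A B := fun k => hsub k ⟨huv k, le_rfl⟩
  have key : ∀ x ∈ Icc A B, ∀ y ∈ Icc A B, x ≤ y →
      |f x - f y| ≤ (∑' k, C k) * ω (y - x) := by
    intro x hx y hy hxy
    apply le_of_forall_pos_le_add
    intro ε hε
    -- the length of `[u k, v k] ∩ [x, s]`
    set l : ℕ → ℝ → ℝ := fun k s => max 0 (min s (v k) - max x (u k)) with hldef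
    have hlnn : ∀ k s, 0 ≤ l k s := fun k s => le_max_left _ _
    have hlle : ∀ k s, l k s ≤ B - A := by
      intro k s
      have h1 := (huAB k).1
      have h2 := (hvAB k).2
      have h3 := min_le_right s (v k)
      have h4 := le_max_right x (u k)
      simp only [hldef]
      exact max_le (by linarith) (by linarith)
    have hlmono : ∀ k s s', s ≤ s' → l k s ≤ l k s' := by
      intro k s s' h
      simp only [hldef]
      exact max_le_max le_rfl (sub_le_sub_right (min_le_min h le_rfl) _)
    have hsummA : ∀ s, Summable (fun k => C k * ω (l k s)) := fun s =>
      Summable.of_nonneg_of_le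
        (fun k => mul_nonneg (hC k) (hωnn _ (hlnn k s)))
        (fun k => mul_le_mul_of_nonneg_left
          (hωmono' _ _ (hlnn k s) (hlle k s)) (hC k))
        (hsum.mul_right _)
    set AA : ℝ → ℝ := fun s => ∑' k, C k * ω (l k s) with hAAdef
    have hAAnn : ∀ s, 0 ≤ AA s := fun s =>
      tsum_nonneg fun k => mul_nonneg (hC k) (hωnn _ (hlnn k s))
    have hAAmono : ∀ s s', s ≤ s' → AA s ≤ AA s' := by
      intro s s' h
      exact Summable.tsum_le_tsum
        (fun k => mul_le_mul_of_nonneg_left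
          (hωmono' _ _ (hlnn k s) (hlmono k s s' h)) (hC k))
        (hsummA s) (hsummA s')
    have hAAle : AA y ≤ (∑' k, C k) * ω (y - x) := by
      rw [← tsum_mul_right]
      refine Summable.tsum_le_tsum (fun k => ?_) (hsummA y) (hsum.mul_right _)
      refine mul_le_mul_of_nonneg_left (hωmono' _ _ (hlnn k y) ?_) (hC k)
      have h3 := min_le_left y (v k)
      have h4 := le_max_left x (u k)
      simp only [hldef]
      exact max_le (by linarith) (by linarith)
    have hAAcont : Continuous AA := by
      rw [hAAdef]
      apply continuous_tsum (u := fun k => C k * ω (B - A))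
      · intro k
        have hcl : Continuous (fun s => l k s) := by
          simp only [hldef]
          exact continuous_const.max
            ((continuous_id.min continuous_const).sub continuous_const)
        exact continuous_const.mul
          (hω_cont.comp_continuous hcl (fun s => hlnn k s))
      · exact hsum.mul_right _
      · intro k s
        rw [Real.norm_eq_abs,
          abs_of_nonneg (mul_nonneg (hC k) (hωnn _ (hlnn k s)))]
        exact mul_le_mul_of_nonneg_left
          (hωmono' _ _ (hlnn k s) (hlle k s)) (hC k)
    have hAAstep : ∀ k s, max x (u k) ≤ s → s ≤ v k →
        AA (max x (u k)) + C k * ω (s - max x (u k)) ≤ AA s := by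
      intro k s hes hsv
      have hlke : l k (max x (u k)) = 0 := by
        simp only [hldef]
        rw [min_eq_left (hes.trans hsv), sub_self, max_self]
      have hlks : l k s = s - max x (u k) := by
        simp only [hldef]
        rw [min_eq_left hsv]
        exact max_eq_right (sub_nonneg.2 hes)
      have hsumm_ite : ∀ t, Summable
          (fun j => if j = k then 0 else C j * ω (l j t)) := by
        intro t
        refine Summable.of_nonneg_of_le (fun j => ?_) (fun j => ?_) (hsummA t)
        · split_ifs
          · exact le_rfl
          · exact mul_nonneg (hC j) (hωnn _ (hlnn j t))
        · split_ifs
          · exact mul_nonneg (hC j) (hωnn _ (hlnn j t))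
          · exact le_rfl
      simp only [hAAdef]
      rw [Summable.tsum_eq_add_tsum_ite (hsummA s) k,
        Summable.tsum_eq_add_tsum_ite (hsummA (max x (u k))) k, hlke, hω0, mul_zero,
        zero_add, hlks, add_comm]
      refine add_le_add_right (Summable.tsum_le_tsum (fun j => ?_)
        (hsumm_ite (max x (u k))) (hsumm_ite s)) _
      by_cases hjk : j = k
      · simp [hjk]
      · simp only [if_neg hjk]
        exact mul_le_mul_of_nonneg_left
          (hωmono' _ _ (hlnn j _) (hlmono j _ _ hes)) (hC j)
    -- the ε-budget for crossing stuck points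
    set w : ℕ → ℝ := fun k => ε / 2 * (1 / 2 : ℝ) ^ k with hwdef
    have hwnn : ∀ k, 0 ≤ w k := by
      intro k
      simp only [hwdef]
      positivity
    have hwpos : ∀ k, 0 < w k := by
      intro k
      simp only [hwdef]
      positivity
    have hwsumm : Summable w := by
      simp only [hwdef]
      exact summable_geometric_two.mul_left _
    have hwsum : ∑' k, w k = ε := by
      simp only [hwdef]
      rw [tsum_mul_left, tsum_geometric_two]
      ring
    set BB : ℝ → ℝ := fun s => ∑' k, if v k < s then w k else 0 with hBBdef
    have hsummB : ∀ s, Summable (fun k => if v k < s then w k else 0) := by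
      intro s
      refine Summable.of_nonneg_of_le (fun k => ?_) (fun k => ?_) hwsumm
      · split_ifs
        · exact hwnn k
        · exact le_rfl
      · split_ifs
        · exact le_rfl
        · exact hwnn k
    have hBBnn : ∀ s, 0 ≤ BB s := by
      intro s
      refine tsum_nonneg fun k => ?_
      split_ifs
      · exact hwnn k
      · exact le_rfl
    have hBBmono : ∀ s s', s ≤ s' → BB s ≤ BB s' := by
      intro s s' h
      refine Summable.tsum_le_tsum (fun k => ?_) (hsummB s) (hsummB s')
      split_ifs with h1 h2
      · exact le_rfl
      · exact absurd (h1.trans_le h) h2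
      · exact hwnn k
      · exact le_rfl
    have hBBle : ∀ s, BB s ≤ ε := by
      intro s
      rw [← hwsum]
      refine Summable.tsum_le_tsum (fun k => ?_) (hsummB s) hwsumm
      split_ifs
      · exact le_rfl
      · exact hwnn k
    have hBBstep : ∀ k0 s, v k0 < s → BB (v k0) + w k0 ≤ BB s := by
      intro k0 s hvs
      have hsumm_ite : ∀ t, Summable
          (fun j => if j = k0 then 0 else if v j < t then w j else 0) := by
        intro t
        refine Summable.of_nonneg_of_le (fun j => ?_) (fun j => ?_) (hsummB t)
        · split_ifs
          · exact le_rfl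
          · exact hwnn j
          · exact le_rfl
        · split_ifs
          · exact hwnn j
          · exact le_rfl
          · exact le_rfl
          · exact le_rfl
      simp only [hBBdef]
      rw [Summable.tsum_eq_add_tsum_ite (hsummB s) k0,
        Summable.tsum_eq_add_tsum_ite (hsummB (v k0)) k0, if_neg (lt_irrefl (v k0)),
        if_pos hvs, zero_add, add_comm (∑' j, if j = k0 then 0 else if v j < v k0 then w j else 0)]
      refine add_le_add_right (Summable.tsum_le_tsum (fun j => ?_)
        (hsumm_ite (v k0)) (hsumm_ite s)) _
      by_cases hjk : j = k0
      · simp [hjk]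
      · simp only [if_neg hjk]
        split_ifs with h1 h2
        · exact le_rfl
        · exact absurd (h1.trans hvs) h2
        · exact hwnn j
        · exact le_rfl
    -- the set for the continuous induction
    set S : Set ℝ :=
      {t | t ∈ Icc x y ∧ ∀ s ∈ Icc x t, |f x - f s| ≤ AA s + BB s} with hSdef
    have hxS : x ∈ S := by
      refine ⟨⟨le_rfl, hxy⟩, ?_⟩
      intro s hs
      have hsx : s = x := le_antisymm hs.2 hs.1
      rw [hsx, sub_self, abs_zero]
      exact add_nonneg (hAAnn x) (hBBnn x)
    have hSbdd : BddAbove S := ⟨y, fun t ht => ht.1.2⟩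
    set σ := sSup S with hσdef
    have hxσ : x ≤ σ := le_csSup hSbdd hxS
    have hσy : σ ≤ y := csSup_le ⟨x, hxS⟩ (fun t ht => ht.1.2)
    have hσAB : σ ∈ Icc A B := ⟨hx.1.trans hxσ, hσy.trans hy.2⟩
    have hlt : ∀ s, x ≤ s → s < σ → |f x - f s| ≤ AA s + BB s := by
      intro s hxs hsσ
      obtain ⟨t, htS, hst⟩ := exists_lt_of_lt_csSup ⟨x, hxS⟩ hsσ
      exact htS.2 s ⟨hxs, hst.le⟩
    have hσbound : |f x - f σ| ≤ AA σ + BB σ := by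
      rcases eq_or_lt_of_le hxσ with h | h
      · rw [← h, sub_self, abs_zero]
        exact add_nonneg (hAAnn x) (hBBnn x)
      · haveI hne : (𝓝[Ioo x σ] σ).NeBot := by
          rw [← mem_closure_iff_nhdsWithin_neBot, closure_Ioo h.ne]
          exact ⟨h.le, le_rfl⟩
        have hsubIcc : Ioo x σ ⊆ Icc A B := fun s hs =>
          ⟨hx.1.trans hs.1.le, (hs.2.le.trans hσy).trans hy.2⟩
        have htf : Tendsto f (𝓝[Ioo x σ] σ) (𝓝 (f σ)) :=
          (hf σ hσAB).mono_left (nhdsWithin_mono σ hsubIcc)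
        have h1 : Tendsto (fun s => |f x - f s|) (𝓝[Ioo x σ] σ)
            (𝓝 |f x - f σ|) := (tendsto_const_nhds.sub htf).abs
        have h2 : Tendsto (fun s => AA s + BB σ) (𝓝[Ioo x σ] σ)
            (𝓝 (AA σ + BB σ)) :=
          ((hAAcont.tendsto σ).mono_left nhdsWithin_le_nhds).add
            tendsto_const_nhds
        refine le_of_tendsto_of_tendsto h1 h2 ?_
        filter_upwards [self_mem_nhdsWithin] with s hs
        exact (hlt s hs.1.le hs.2).trans
          (add_le_add_right (hBBmono s σ hs.2.le) (AA s))
    have hσS : σ ∈ S := by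
      refine ⟨⟨hxσ, hσy⟩, ?_⟩
      intro s hs
      rcases lt_or_eq_of_le hs.2 with h | h
      · exact hlt s hs.1 h
      · rw [h]
        exact hσbound
    have hσeq : σ = y := by
      by_contra hne'
      have hσlty : σ < y := lt_of_le_of_ne hσy hne'
      by_cases hcase : ∃ k, σ ∈ Icc (u k) (v k) ∧ σ < v k
      · -- non-stuck case: extend within the interval k
        obtain ⟨k, hk, hkv⟩ := hcase
        set t' := min (v k) y with ht'def
        have hσt' : σ < t' := lt_min hkv hσlty
        have ht'S : t' ∈ S := by
          refine ⟨⟨hxσ.trans hσt'.le, min_le_right _ _⟩, ?_⟩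
          intro s hs
          rcases le_or_gt s σ with hsσ | hσs
          · exact hσS.2 s ⟨hs.1, hsσ⟩
          · have heσ : max x (u k) ≤ σ := max_le hxσ hk.1
            have hes : max x (u k) ≤ s := heσ.trans hσs.le
            have hsv : s ≤ v k := hs.2.trans (min_le_left _ _)
            have hbe : |f x - f (max x (u k))| ≤ AA (max x (u k)) + BB (max x (u k)) :=
              hσS.2 (max x (u k)) ⟨le_max_left _ _, heσ⟩
            have hstepA := hAAstep k s hes hsv
            have hfe : |f (max x (u k)) - f s| ≤ C k * ω (s - max x (u k)) := by
              have h1 := hfk k (max x (u k)) ⟨le_max_right _ _, heσ.trans hk.2⟩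
                s ⟨hk.1.trans hσs.le, hsv⟩
              rwa [abs_sub_comm (max x (u k)) s,
                abs_of_nonneg (sub_nonneg.2 hes)] at h1
            have hBe : BB (max x (u k)) ≤ BB s := hBBmono _ _ hes
            calc |f x - f s| ≤ |f x - f (max x (u k))| + |f (max x (u k)) - f s| :=
                  abs_sub_le _ _ _
              _ ≤ (AA (max x (u k)) + BB (max x (u k))) + C k * ω (s - max x (u k)) :=
                  add_le_add hbe hfe
              _ ≤ AA s + BB s := by linarith
        have hcontra := le_csSup hSbdd ht'S
        rw [← hσdef] at hcontra
        exact absurd hcontra (not_le.2 hσt')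
      · -- stuck case: σ is the right endpoint of every interval containing it
        push_neg at hcase
        obtain ⟨k0, hk0⟩ := mem_iUnion.1 (hcover hσAB)
        have hvk0 : v k0 = σ := le_antisymm (hcase k0 hk0) hk0.2
        have hcw := hf σ hσAB
        rw [Metric.continuousWithinAt_iff] at hcw
        obtain ⟨δ, hδ, hcont⟩ := hcw (w k0) (hwpos k0)
        set t' := min (σ + δ / 2) y with ht'def
        have hσt' : σ < t' := lt_min (by linarith) hσlty
        have ht'S : t' ∈ S := by
          refine ⟨⟨hxσ.trans hσt'.le, min_le_right _ _⟩, ?_⟩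
          intro s hs
          rcases le_or_gt s σ with hsσ | hσs
          · exact hσS.2 s ⟨hs.1, hsσ⟩
          · have hsAB : s ∈ Icc A B :=
              ⟨hx.1.trans hs.1, (hs.2.trans (min_le_right _ _)).trans hy.2⟩
            obtain ⟨j, hj⟩ := mem_iUnion.1 (hcover hsAB)
            have hujσ : σ < u j := by
              by_contra hle
              push_neg at hle
              have hvj : v j ≤ σ := hcase j ⟨hle, hσs.le.trans hj.2⟩
              have := hj.2
              linarith
            have hujs : u j ≤ s := hj.1
            have hst' : s ≤ σ + δ / 2 := hs.2.trans (min_le_left _ _)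
            have hdist : dist (u j) σ < δ := by
              rw [Real.dist_eq, abs_of_nonneg (by linarith : (0:ℝ) ≤ u j - σ)]
              linarith
            have hfσuj : |f (u j) - f σ| < w k0 := by
              have h1 := hcont (huAB j) hdist
              rwa [Real.dist_eq] at h1
            have hfujs : |f (u j) - f s| ≤ C j * ω (s - u j) := by
              have h1 := hfk j (u j) ⟨le_rfl, huv j⟩ s hj
              rwa [abs_sub_comm (u j) s,
                abs_of_nonneg (sub_nonneg.2 hujs)] at h1
            have hAs : AA σ + C j * ω (s - u j) ≤ AA s := by
              have hmax : max x (u j) = u j :=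
                max_eq_right (hxσ.trans hujσ.le)
              have hstep := hAAstep j s (by rw [hmax]; exact hujs) hj.2
              rw [hmax] at hstep
              have hmono := hAAmono σ (u j) hujσ.le
              linarith
            have hBs : BB σ + w k0 ≤ BB s := by
              have hstep := hBBstep k0 s (by rw [hvk0]; exact hσs)
              rwa [hvk0] at hstep
            have habs1 : |f x - f s| ≤ |f x - f σ| + |f σ - f (u j)| + |f (u j) - f s| := by
              have h1 := abs_sub_le (f x) (f σ) (f s)
              have h2 := abs_sub_le (f σ) (f (u j)) (f s)
              linarith
            have habs2 : |f σ - f (u j)| = |f (u j) - f σ| := abs_sub_comm _ _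
            have hfxσ := hσbound
            rw [habs2] at habs1
            calc |f x - f s| ≤ |f x - f σ| + |f (u j) - f σ| + |f (u j) - f s| :=
                habs1
              _ ≤ (AA σ + BB σ) + w k0 + C j * ω (s - u j) :=
                add_le_add (add_le_add hfxσ hfσuj.le) hfujs
              _ ≤ AA s + BB s := by linarith
        have hcontra := le_csSup hSbdd ht'S
        rw [← hσdef] at hcontra
        exact absurd hcontra (not_le.2 hσt')
    have hyS : y ∈ S := hσeq ▸ hσS
    calc |f x - f y| ≤ AA y + BB y := hyS.2 y ⟨hxy, le_rfl⟩
      _ ≤ (∑' k, C k) * ω (y - x) + ε := add_le_add hAAle (hBBle y)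
  intro x hx y hy
  rcases le_total x y with h | h
  · have hres := key x hx y hy h
    rw [abs_sub_comm x y, abs_of_nonneg (sub_nonneg.2 h)]
    exact hres
  · have hres := key y hy x hx h
    rw [abs_sub_comm (f x) (f y), abs_of_nonneg (sub_nonneg.2 h)]
    exact hres
end

section
/- (Gluing Principle, part (ii)) Let I ⊂ ℝ be a compact interval and let ω : [0,∞) → [0,∞) be continuous, monotone increasing and concave with ω(0) = 0 and ω(t) > 0 for t > 0. Let (I_k)_{k≥1} be a countable family of closed subintervals of I with pairwise disjoint interiors whose union is I, and let f : I → ℝ be continuous with f(x) = x at every endpoint of every I_k. Suppose that for each k there is a constant C_k ≥ 0 with |f(z) − f(w)| ≤ C_k·ω(|z − w|) for all z, w ∈ I_k, and that S = sup_k C_k < ∞. Then |f(x) − f(y)| ≤ (diam(I)/ω(diam(I)) + 2S)·ω(|x − y|) for all x, y ∈ I. -/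
open Set

/-- Gluing Principle, part (ii).  Same setting as part (i), but now assuming that
`f` fixes all the endpoints `u k, v k` of the subintervals and that the constants
`C k` are uniformly bounded by `S`.  Then `f` has modulus of continuity `ω` on
`[A,B]` with seminorm at most `diam(I)/ω(diam(I)) + 2S`. -/
theorem gluing_principle_ii (A B : ℝ) (hAB : A < B) (ω : ℝ → ℝ)
    (hω_cont : ContinuousOn ω (Ici 0)) (hω_mono : MonotoneOn ω (Ici 0))
    (hω_conc : ConcaveOn ℝ (Ici 0) ω) (hω0 : ω 0 = 0)
    (hω_pos : ∀ t > (0 : ℝ), 0 < ω t)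
    (u v : ℕ → ℝ) (huv : ∀ k, u k ≤ v k)
    (hsub : ∀ k, Icc (u k) (v k) ⊆ Icc A B)
    (hdisj : ∀ j k, j ≠ k → Ioo (u j) (v j) ∩ Ioo (u k) (v k) = ∅)
    (hcover : Icc A B ⊆ ⋃ k, Icc (u k) (v k))
    (f : ℝ → ℝ) (hf : ContinuousOn f (Icc A B))
    (hfix : ∀ k, f (u k) = u k ∧ f (v k) = v k)
    (C : ℕ → ℝ) (hC : ∀ k, 0 ≤ C k)
    (hfk : ∀ k, ∀ z ∈ Icc (u k) (v k), ∀ w ∈ Icc (u k) (v k),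
      |f z - f w| ≤ C k * ω |z - w|)
    (S : ℝ) (hS : ∀ k, C k ≤ S) :
    ∀ x ∈ Icc A B, ∀ y ∈ Icc A B,
      |f x - f y| ≤ ((B - A) / ω (B - A) + 2 * S) * ω |x - y| := by
  have hD : (0:ℝ) < B - A := by linarith
  have hωD : 0 < ω (B - A) := hω_pos _ hD
  have hS0 : (0:ℝ) ≤ S := le_trans (hC 0) (hS 0)
  have hDiv : (0:ℝ) ≤ (B - A) / ω (B - A) := div_nonneg hD.le hωD.le
  -- concavity: for 0 ≤ t ≤ B-A, t * ω (B-A) ≤ (B-A) * ω t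
  have key : ∀ t, 0 ≤ t → t ≤ B - A → t * ω (B - A) ≤ (B - A) * ω t := by
    intro t ht htD
    have ha : 0 ≤ t / (B - A) := div_nonneg ht hD.le
    have hb : 0 ≤ 1 - t / (B - A) := by
      rw [sub_nonneg]
      exact (div_le_one hD).2 htD
    have h := hω_conc.2 (mem_Ici.2 hD.le) (mem_Ici.2 le_rfl) ha hb (by ring)
    simp only [smul_eq_mul, mul_zero, add_zero, hω0] at h
    rw [div_mul_cancel₀ t hD.ne'] at h
    have h2 : (B - A) * (t / (B - A) * ω (B - A)) ≤ (B - A) * ω t :=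
      mul_le_mul_of_nonneg_left h hD.le
    calc t * ω (B - A) = (B - A) * (t / (B - A) * ω (B - A)) := by
          field_simp
      _ ≤ (B - A) * ω t := h2
  have hωnn : ∀ t, 0 ≤ t → 0 ≤ ω t := by
    intro t ht
    calc (0:ℝ) = ω 0 := hω0.symm
      _ ≤ ω t := hω_mono (mem_Ici.2 le_rfl) (mem_Ici.2 ht) ht
  suffices H : ∀ x ∈ Icc A B, ∀ y ∈ Icc A B, x ≤ y →
      |f x - f y| ≤ ((B - A) / ω (B - A) + 2 * S) * ω |x - y| by
    intro x hx y hy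
    rcases le_total x y with h | h
    · exact H x hx y hy h
    · rw [abs_sub_comm (f x), abs_sub_comm x]
      exact H y hy x hx h
  intro x hx y hy hxy
  have habs : |x - y| = y - x := by rw [abs_sub_comm]; exact abs_of_nonneg (by linarith)
  have hd0 : 0 ≤ y - x := by linarith
  have hωd : 0 ≤ ω |x - y| := hωnn _ (abs_nonneg _)
  obtain ⟨j, hj⟩ := mem_iUnion.1 (hcover hx)
  obtain ⟨k, hk⟩ := mem_iUnion.1 (hcover hy)
  -- same interval case helper
  have same : ∀ i, x ∈ Icc (u i) (v i) → y ∈ Icc (u i) (v i) →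
      |f x - f y| ≤ ((B - A) / ω (B - A) + 2 * S) * ω |x - y| := by
    intro i hxi hyi
    calc |f x - f y| ≤ C i * ω |x - y| := hfk i x hxi y hyi
      _ ≤ ((B - A) / ω (B - A) + 2 * S) * ω |x - y| := by
          apply mul_le_mul_of_nonneg_right _ hωd
          have := hS i
          linarith
  by_cases hyj : y ≤ v j
  · exact same j hj ⟨le_trans hj.1 hxy, hyj⟩
  by_cases hxk : u k ≤ x
  · exact same k ⟨hxk, by linarith [hk.2]⟩ hk
  push_neg at hyj hxk
  -- now v j < y and x < u k, both v j, u k ∈ [x,y]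
  have hvj1 : x ≤ v j := hj.2
  have huk2 : u k ≤ y := hk.1
  have hvjIcc : v j ∈ Icc (u j) (v j) := ⟨huv j, le_rfl⟩
  have hukIcc : u k ∈ Icc (u k) (v k) := ⟨le_rfl, huv k⟩
  have h1 : |f x - f (v j)| ≤ S * ω |x - y| := by
    calc |f x - f (v j)| ≤ C j * ω |x - v j| := hfk j x hj (v j) hvjIcc
      _ ≤ S * ω |x - y| := by
        apply mul_le_mul (hS j) _ (hωnn _ (abs_nonneg _)) hS0
        apply hω_mono (mem_Ici.2 (abs_nonneg _)) (mem_Ici.2 (abs_nonneg _))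
        rw [habs, abs_sub_comm, abs_of_nonneg (by linarith : (0:ℝ) ≤ v j - x)]
        linarith
  have h3 : |f (u k) - f y| ≤ S * ω |x - y| := by
    calc |f (u k) - f y| ≤ C k * ω |u k - y| := hfk k (u k) hukIcc y hk
      _ ≤ S * ω |x - y| := by
        apply mul_le_mul (hS k) _ (hωnn _ (abs_nonneg _)) hS0
        apply hω_mono (mem_Ici.2 (abs_nonneg _)) (mem_Ici.2 (abs_nonneg _))
        rw [habs, abs_sub_comm, abs_of_nonneg (by linarith : (0:ℝ) ≤ y - u k)]
        linarith
  have h2 : |f (v j) - f (u k)| ≤ (B - A) / ω (B - A) * ω |x - y| := by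
    rw [(hfix j).2, (hfix k).1]
    have hb1 : |v j - u k| ≤ y - x := by
      rw [abs_sub_le_iff]; constructor <;> linarith
    have hdBA : y - x ≤ B - A := by
      have := hx.1; have := hy.2; linarith
    have hk2 := key (y - x) hd0 hdBA
    have hmono : ω (y - x) ≤ ω (B - A) := hω_mono (mem_Ici.2 hd0) (mem_Ici.2 hD.le) hdBA
    rw [habs, div_mul_eq_mul_div, le_div_iff₀ hωD]
    calc |v j - u k| * ω (B - A) ≤ (y - x) * ω (B - A) :=
          mul_le_mul_of_nonneg_right hb1 hωD.le
      _ ≤ (B - A) * ω (y - x) := hk2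
  calc |f x - f y| ≤ |f x - f (v j)| + |f (v j) - f (u k)| + |f (u k) - f y| := by
        have := abs_sub_le (f x) (f (v j)) (f (u k))
        have := abs_sub_le (f x) (f (u k)) (f y)
        linarith
    _ ≤ S * ω |x - y| + (B - A) / ω (B - A) * ω |x - y| + S * ω |x - y| := by
        linarith
    _ = ((B - A) / ω (B - A) + 2 * S) * ω |x - y| := by ring
end

section
/- (Auxiliary Lemma, Hölder estimate) Let b ≥ 1 be an integer and α ∈ (0,1]. Let φ : [0,1] → [0,1] be a concave, strictly increasing, continuous bijection with φ(0) = 0 and φ(1) = 1, and suppose its inverse φ^{-1} extends to a convex, increasing, continuous function Φ : [0, 1 + 1/b] → ℝ with Φ = φ^{-1} on [0,1] (Φ, being convex, is differentiable Lebesgue-almost everywhere). Let g = φ ∘ g_{1,b} ∘ φ^{-1} : [0,1] → [0,1]. Then the α-Hölder seminorm of g on [0,1] satisfies [g]_{α,[0,1]} ≤ [φ]_{α,[0,1]} · b^{α+1} · ∫_{1/b}^{1+1/b} (Φ'(t))^α dt. -/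
open Set MeasureTheory

/-- The piecewise-affine `b`-branched sawtooth map on `[0,1]`:
`g1 b x = b*x - k` on `[k/b,(k+1)/b]` for `k ∈ {0,…,b-1}` even, and
`g1 b x = (k+1) - b*x` there for `k` odd.  (For `x ∈ [0,1]`, the index
`k = min ⌊b*x⌋ (b-1)` is exactly the branch index; at common endpoints of two
branches both formulas agree, so this agrees with the piecewise definition.) -/
noncomputable def g1 (b : ℕ) (x : ℝ) : ℝ :=
  let k : ℤ := min ⌊(b : ℝ) * x⌋ ((b : ℤ) - 1)
  if Even k then (b : ℝ) * x - (k : ℝ) else ((k : ℝ) + 1) - (b : ℝ) * x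

/-- the set of even integers in ℝ -/
def evenInts : Set ℝ := Set.range (fun n : ℤ => (2 * n : ℝ))

lemma evenInts_nonempty : evenInts.Nonempty := ⟨0, ⟨0, by norm_num⟩⟩

noncomputable def Tmap (b : ℕ) (w : ℝ) : ℝ :=
  if Even (min ⌊w⌋ ((b : ℤ) - 1)) then w - ((min ⌊w⌋ ((b : ℤ) - 1) : ℤ) : ℝ)
  else ((min ⌊w⌋ ((b : ℤ) - 1) : ℤ) : ℝ) + 1 - w

lemma g1_eq_Tmap (b : ℕ) (x : ℝ) : g1 b x = Tmap b ((b : ℝ) * x) := by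
  simp only [g1, Tmap]

lemma branch_bounds (b : ℕ) (hb : 1 ≤ b) {w : ℝ} (hw0 : 0 ≤ w) (hwb : w ≤ b) :
    ((min ⌊w⌋ ((b : ℤ) - 1) : ℤ) : ℝ) ≤ w ∧ w ≤ ((min ⌊w⌋ ((b : ℤ) - 1) : ℤ) : ℝ) + 1 := by
  rcases le_or_gt ⌊w⌋ ((b : ℤ) - 1) with h | h
  · rw [min_eq_left h]
    exact ⟨Int.floor_le w, (Int.lt_floor_add_one w).le⟩
  · rw [min_eq_right h.le]
    have hbw : (b : ℝ) ≤ w := by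
      have h0 : (b : ℤ) ≤ ⌊w⌋ := by omega
      have h1 : ((b : ℤ) : ℝ) ≤ (⌊w⌋ : ℝ) := by exact_mod_cast h0
      calc (b : ℝ) = ((b : ℤ) : ℝ) := by push_cast; ring
        _ ≤ (⌊w⌋ : ℝ) := h1
        _ ≤ w := Int.floor_le w
    have heq : w = (b : ℝ) := le_antisymm hwb hbw
    constructor
    · push_cast; linarith
    · push_cast; linarith

lemma Tmap_eq_infDist (b : ℕ) (hb : 1 ≤ b) {w : ℝ} (hw0 : 0 ≤ w) (hwb : w ≤ b) :
    Tmap b w = Metric.infDist w evenInts := by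
  obtain ⟨h1, h2⟩ := branch_bounds b hb hw0 hwb
  set k : ℤ := min ⌊w⌋ ((b : ℤ) - 1) with hk
  have hne : Nonempty evenInts := ⟨⟨0, ⟨0, by norm_num⟩⟩⟩
  apply le_antisymm
  · rw [Metric.infDist_eq_iInf]
    apply le_ciInf
    rintro ⟨s, n, rfl⟩
    rw [Real.dist_eq]
    simp only [Tmap, ← hk]
    split
    · rename_i hev
      obtain ⟨j, hj⟩ := hev
      rcases le_or_gt (2 * n) k with hn | hn
      · have hn' : (2 * (n : ℝ)) ≤ (k : ℝ) := by exact_mod_cast hn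
        have := le_abs_self (w - 2 * (n : ℝ))
        push_cast at hn' ⊢
        linarith
      · have hn2 : k + 2 ≤ 2 * n := by omega
        have hn' : (k : ℝ) + 2 ≤ 2 * (n : ℝ) := by exact_mod_cast hn2
        have := neg_abs_le (w - 2 * (n : ℝ))
        push_cast at hn' ⊢
        linarith
    · rename_i hev
      have hodd : Odd k := Int.not_even_iff_odd.mp hev
      obtain ⟨j, hj⟩ := hodd
      rcases lt_trichotomy (2 * n) k with hn | hn | hn
      · have hn2 : 2 * n ≤ k - 1 := by omega
        have hn' : 2 * (n : ℝ) ≤ (k : ℝ) - 1 := by exact_mod_cast hn2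
        have := le_abs_self (w - 2 * (n : ℝ))
        push_cast at hn' ⊢
        linarith
      · exfalso; omega
      · have hn2 : k + 1 ≤ 2 * n := by omega
        have hn' : (k : ℝ) + 1 ≤ 2 * (n : ℝ) := by exact_mod_cast hn2
        have := neg_abs_le (w - 2 * (n : ℝ))
        push_cast at hn' ⊢
        linarith
  · simp only [Tmap, ← hk]
    split
    · rename_i hev
      obtain ⟨j, hj⟩ := hev
      have hmem : ((2 * j : ℤ) : ℝ) ∈ evenInts := ⟨j, by push_cast; ring⟩
      have := Metric.infDist_le_dist_of_mem (x := w) hmem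
      rw [Real.dist_eq] at this
      have habs : |w - ((2 * j : ℤ) : ℝ)| = w - (k : ℝ) := by
        have h3 : (2 * j : ℤ) = k := by omega
        have : ((2 * j : ℤ) : ℝ) = (k : ℝ) := by exact_mod_cast h3
        rw [this, abs_of_nonneg (by linarith)]
      rw [habs] at this
      exact this
    · rename_i hev
      have hodd : Odd k := Int.not_even_iff_odd.mp hev
      obtain ⟨j, hj⟩ := hodd
      have hmem : ((2 * (j + 1) : ℤ) : ℝ) ∈ evenInts := ⟨j + 1, by push_cast; ring⟩
      have := Metric.infDist_le_dist_of_mem (x := w) hmem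
      rw [Real.dist_eq] at this
      have habs : |w - ((2 * (j + 1) : ℤ) : ℝ)| = (k : ℝ) + 1 - w := by
        have h3 : ((2 * (j + 1) : ℤ) : ℝ) = (k : ℝ) + 1 := by
          have : (2 * (j + 1) : ℤ) = k + 1 := by omega
          rw [this]; push_cast; ring
        rw [h3, abs_of_nonpos (by linarith)]
        ring
      rw [habs] at this
      exact this

lemma g1_mem_Icc (b : ℕ) (hb : 1 ≤ b) {u : ℝ} (hu : u ∈ Set.Icc (0 : ℝ) 1) :
    g1 b u ∈ Set.Icc (0 : ℝ) 1 := by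
  have hb0 : (0 : ℝ) ≤ b := by positivity
  have hw0 : 0 ≤ (b : ℝ) * u := mul_nonneg hb0 hu.1
  have hwb : (b : ℝ) * u ≤ b := by nlinarith [hu.2]
  obtain ⟨h1, h2⟩ := branch_bounds b hb hw0 hwb
  rw [g1_eq_Tmap]
  simp only [Tmap] at *
  split <;> constructor <;> linarith

lemma g1_lipschitz (b : ℕ) (hb : 1 ≤ b) {u v : ℝ} (hu : u ∈ Set.Icc (0 : ℝ) 1)
    (hv : v ∈ Set.Icc (0 : ℝ) 1) : |g1 b u - g1 b v| ≤ (b : ℝ) * |u - v| := by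
  have hb0 : (0 : ℝ) ≤ b := by positivity
  have hwu0 : 0 ≤ (b : ℝ) * u := mul_nonneg hb0 hu.1
  have hwub : (b : ℝ) * u ≤ b := by nlinarith [hu.2]
  have hwv0 : 0 ≤ (b : ℝ) * v := mul_nonneg hb0 hv.1
  have hwvb : (b : ℝ) * v ≤ b := by nlinarith [hv.2]
  rw [g1_eq_Tmap, g1_eq_Tmap, Tmap_eq_infDist b hb hwu0 hwub, Tmap_eq_infDist b hb hwv0 hwvb]
  have h1 := Metric.infDist_le_infDist_add_dist (x := (b : ℝ) * u) (y := (b : ℝ) * v)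
    (s := evenInts)
  have h2 := Metric.infDist_le_infDist_add_dist (x := (b : ℝ) * v) (y := (b : ℝ) * u)
    (s := evenInts)
  rw [Real.dist_eq] at h1 h2
  have hd : |(b : ℝ) * u - (b : ℝ) * v| = (b : ℝ) * |u - v| := by
    rw [← mul_sub, abs_mul, abs_of_nonneg hb0]
  rw [abs_sub_le_iff]
  constructor
  · rw [← hd]; linarith
  · rw [← hd, abs_sub_comm]; linarith

/-- Auxiliary Lemma (Hölder estimate).  Let `φ` be a concave, strictly increasing
homeomorphism of `[0,1]` with inverse `ψ`, whose inverse extends to a convex,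
increasing, continuous function `Φ` on `[0, 1 + 1/b]`.  Then the `α`-Hölder
seminorm of `g = φ ∘ g_{1,b} ∘ ψ` on `[0,1]` is bounded by
`[φ]_α · b^(α+1) · ∫_{1/b}^{1+1/b} (Φ'(t))^α dt`, stated here as: any Hölder
constant `H` for `φ` yields the corresponding Hölder constant for `g`. -/
theorem aux_lemma_holder (b : ℕ) (hb : 1 ≤ b) (α : ℝ) (hα : α ∈ Set.Ioc (0 : ℝ) 1)
    (φ ψ Φ : ℝ → ℝ)
    (hφ_cont : ContinuousOn φ (Set.Icc 0 1))
    (hφ_mono : StrictMonoOn φ (Set.Icc 0 1))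
    (hφ_conc : ConcaveOn ℝ (Set.Icc 0 1) φ)
    (hφ0 : φ 0 = 0) (hφ1 : φ 1 = 1)
    (hφ_maps : Set.MapsTo φ (Set.Icc 0 1) (Set.Icc 0 1))
    (hψ_inv : Set.InvOn ψ φ (Set.Icc 0 1) (Set.Icc 0 1))
    (hΦ_conv : ConvexOn ℝ (Set.Icc (0 : ℝ) (1 + 1 / (b : ℝ))) Φ)
    (hΦ_mono : MonotoneOn Φ (Set.Icc (0 : ℝ) (1 + 1 / (b : ℝ))))
    (hΦ_cont : ContinuousOn Φ (Set.Icc (0 : ℝ) (1 + 1 / (b : ℝ))))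
    (hΦ_ext : ∀ x ∈ Set.Icc (0 : ℝ) 1, Φ x = ψ x)
    (H : ℝ)
    (hH : ∀ x ∈ Set.Icc (0 : ℝ) 1, ∀ y ∈ Set.Icc (0 : ℝ) 1,
      |φ x - φ y| ≤ H * |x - y| ^ α) :
    ∀ x ∈ Set.Icc (0 : ℝ) 1, ∀ y ∈ Set.Icc (0 : ℝ) 1,
      |φ (g1 b (ψ x)) - φ (g1 b (ψ y))|
        ≤ H * (b : ℝ) ^ (α + 1)
            * (∫ t in (1 / (b : ℝ))..(1 + 1 / (b : ℝ)), deriv Φ t ^ α)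
            * |x - y| ^ α := by
  obtain ⟨hα0, hα1⟩ := hα
  have hb0 : (0 : ℝ) < b := by exact_mod_cast Nat.lt_of_lt_of_le Nat.zero_lt_one hb
  have hbinv : (0 : ℝ) < 1 / b := by positivity
  have hbinv1 : 1 / (b : ℝ) ≤ 1 := by
    rw [div_le_one hb0]; exact_mod_cast hb
  set c : ℝ := 1 + 1 / (b : ℝ) with hc
  have h1c : (1 : ℝ) < c := by rw [hc]; linarith
  have h0c : (0 : ℝ) < c := by linarith
  have hsub01 : Set.Icc (0 : ℝ) 1 ⊆ Set.Icc 0 c := Set.Icc_subset_Icc le_rfl h1c.le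
  have h0mem : (0 : ℝ) ∈ Set.Icc (0 : ℝ) c := ⟨le_rfl, h0c.le⟩
  have hcmem : c ∈ Set.Icc (0 : ℝ) c := ⟨h0c.le, le_rfl⟩
  have h0mem1 : (0 : ℝ) ∈ Set.Icc (0 : ℝ) 1 := by constructor <;> norm_num
  have h1mem1 : (1 : ℝ) ∈ Set.Icc (0 : ℝ) 1 := by constructor <;> norm_num
  -- ψ facts
  have hψ0 : ψ 0 = 0 := by
    have h := hψ_inv.1 h0mem1; rwa [hφ0] at h
  have hψ1 : ψ 1 = 1 := by
    have h := hψ_inv.1 h1mem1; rwa [hφ1] at h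
  have hψ_mem : ∀ x ∈ Set.Icc (0 : ℝ) 1, ψ x ∈ Set.Icc (0 : ℝ) 1 := by
    intro x hx
    have e0 : Φ 0 = 0 := by rw [hΦ_ext 0 h0mem1, hψ0]
    have e1 : Φ 1 = 1 := by rw [hΦ_ext 1 h1mem1, hψ1]
    rw [← hΦ_ext x hx]
    exact ⟨e0 ▸ hΦ_mono h0mem (hsub01 hx) hx.1, e1 ▸ hΦ_mono (hsub01 hx) (hsub01 h1mem1) hx.2⟩
  have hH1 : 1 ≤ H := by
    have h := hH 1 h1mem1 0 h0mem1
    simpa [hφ0, hφ1, Real.one_rpow] using h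
  have hH0 : 0 ≤ H := by linarith
  -- a.e. differentiability on the interior
  have hae_diff : ∀ᵐ t : ℝ, t ∈ Set.Ioo (0 : ℝ) c → DifferentiableAt ℝ Φ t := by
    have hG_mono : Monotone (fun t => Φ (max 0 (min t c))) := by
      intro s t hst
      have hs : max 0 (min s c) ∈ Set.Icc (0 : ℝ) c :=
        ⟨le_max_left _ _, max_le h0c.le (min_le_right _ _)⟩
      have ht : max 0 (min t c) ∈ Set.Icc (0 : ℝ) c :=
        ⟨le_max_left _ _, max_le h0c.le (min_le_right _ _)⟩
      exact hΦ_mono hs ht (max_le_max le_rfl (min_le_min_right _ hst))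
    filter_upwards [hG_mono.ae_differentiableAt] with t ht hmem
    have hev : (fun t => Φ (max 0 (min t c))) =ᶠ[nhds t] Φ := by
      filter_upwards [Ioo_mem_nhds hmem.1 hmem.2] with s hs
      rw [min_eq_left hs.2.le, max_eq_right hs.1.le]
    exact hev.differentiableAt_iff.mp ht
  -- slope helper
  have slope_eq : ∀ p q : ℝ, slope Φ p q = (Φ q - Φ p) / (q - p) := by
    intro p q
    rw [slope_def_field]
  have hKey_ge : ∀ {p t : ℝ}, p ∈ Set.Icc (0 : ℝ) c → t ∈ Set.Icc (0 : ℝ) c → p < t →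
      DifferentiableAt ℝ Φ t → (Φ t - Φ p) / (t - p) ≤ deriv Φ t := by
    intro p t hp ht hpt hdiff
    have h := hΦ_conv.slope_le_deriv hp ht hpt hdiff
    rwa [slope_eq] at h
  have hKey_le : ∀ {t : ℝ}, t ∈ Set.Icc (0 : ℝ) c → t < c →
      DifferentiableAt ℝ Φ t → deriv Φ t ≤ (Φ c - Φ t) / (c - t) := by
    intro t ht htc hdiff
    have h := hΦ_conv.deriv_le_slope ht hcmem htc hdiff
    rwa [slope_eq] at h
  have hderiv_nonneg : ∀ {t : ℝ}, t ∈ Set.Ioo (0 : ℝ) c → DifferentiableAt ℝ Φ t →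
      0 ≤ deriv Φ t := by
    intro t ht hdiff
    refine le_trans ?_ (hKey_ge h0mem ⟨ht.1.le, ht.2.le⟩ ht.1 hdiff)
    apply div_nonneg _ (by linarith [ht.1])
    have := hΦ_mono h0mem ⟨ht.1.le, ht.2.le⟩ ht.1.le
    linarith
  -- the right derivative function
  set r : ℝ → ℝ := fun t => sInf (slope Φ t '' Set.Ioo t c) with hrdef
  have hslope_nonneg : ∀ {t u : ℝ}, t ∈ Set.Icc (0 : ℝ) c → u ∈ Set.Icc (0 : ℝ) c → t < u →
      0 ≤ slope Φ t u := by
    intro t u ht hu htu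
    rw [slope_eq]
    apply div_nonneg _ (by linarith)
    linarith [hΦ_mono ht hu htu.le]
  have hr_hasDeriv : ∀ t ∈ Set.Ioo (1 : ℝ) c, HasDerivWithinAt Φ (r t) (Set.Ioi t) t := by
    intro t ht
    have ht' : t ∈ Set.Ioo (0 : ℝ) c := ⟨by linarith [ht.1], ht.2⟩
    have hne : (Set.Ioo t c).Nonempty := Set.nonempty_Ioo.2 ht.2
    have hmono : MonotoneOn (slope Φ t) (Set.Ioo t c) := by
      have h := hΦ_conv.slope_mono ⟨ht'.1.le, ht'.2.le⟩
      intro u hu v hv huv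
      exact h ⟨⟨by linarith [hu.1, ht'.1], hu.2.le⟩, (by simp only [Set.mem_singleton_iff]; exact hu.1.ne')⟩
        ⟨⟨by linarith [hv.1, ht'.1], hv.2.le⟩, (by simp only [Set.mem_singleton_iff]; exact hv.1.ne')⟩ huv
    have hbdd : BddBelow (slope Φ t '' Set.Ioo t c) := by
      refine ⟨0, ?_⟩
      rintro s ⟨u, hu, rfl⟩
      exact hslope_nonneg ⟨ht'.1.le, ht'.2.le⟩ ⟨by linarith [hu.1, ht'.1], hu.2.le⟩ hu.1
    have htend := MonotoneOn.tendsto_nhdsWithin_Ioo_right hne hmono hbdd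
    rw [hasDerivWithinAt_iff_tendsto_slope,
      Set.diff_singleton_eq_self (by simp : t ∉ Set.Ioi t)]
    exact htend
  have hr_nonneg : ∀ t ∈ Set.Ioo (1 : ℝ) c, 0 ≤ r t := by
    intro t ht
    apply le_csInf ((Set.nonempty_Ioo.2 ht.2).image _)
    rintro s ⟨u, hu, rfl⟩
    exact hslope_nonneg ⟨by linarith [ht.1], ht.2.le⟩ ⟨by linarith [hu.1, ht.1], hu.2.le⟩ hu.1
  have hr_int : IntegrableOn r (Set.Ioc (1 : ℝ) c) :=
    intervalIntegral.integrableOn_deriv_right_of_nonneg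
      (hΦ_cont.mono (Set.Icc_subset_Icc (by linarith) le_rfl)) hr_hasDeriv hr_nonneg
  -- deriv Φ = r a.e. on Ioo 1 c
  have h_ae_eq : ∀ᵐ t : ℝ, t ∈ Set.Ioo (1 : ℝ) c → deriv Φ t = r t := by
    filter_upwards [hae_diff] with t hdiff ht
    have ht' : t ∈ Set.Ioo (0 : ℝ) c := ⟨by linarith [ht.1], ht.2⟩
    have h1 : Filter.Tendsto (slope Φ t) (nhdsWithin t (Set.Ioi t)) (nhds (deriv Φ t)) := by
      have h := ((hdiff ht').hasDerivAt.hasDerivWithinAt (s := Set.Ioi t))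
      rwa [hasDerivWithinAt_iff_tendsto_slope,
        Set.diff_singleton_eq_self (by simp : t ∉ Set.Ioi t)] at h
    have h2 := hr_hasDeriv t ht
    rw [hasDerivWithinAt_iff_tendsto_slope,
      Set.diff_singleton_eq_self (by simp : t ∉ Set.Ioi t)] at h2
    exact tendsto_nhds_unique h1 h2
  have hderiv_int : IntegrableOn (deriv Φ) (Set.Ioo (1 : ℝ) c) := by
    have hee : deriv Φ =ᵐ[volume.restrict (Set.Ioo (1 : ℝ) c)] r :=
      (ae_restrict_iff' measurableSet_Ioo).2 h_ae_eq
    exact (hr_int.mono_set Set.Ioo_subset_Ioc_self).congr hee.symm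
  -- measurability
  have hmeas : Measurable fun t => deriv Φ t ^ α :=
    (Real.continuous_rpow_const hα0.le).measurable.comp (measurable_deriv Φ)
  -- integrability on [1/b, 1]
  have hK0 : 0 ≤ Φ c - Φ 0 := by linarith [hΦ_mono h0mem hcmem h0c.le]
  have hint1 : IntervalIntegrable (fun t => deriv Φ t ^ α) volume (1 / (b : ℝ)) 1 := by
    rw [intervalIntegrable_iff_integrableOn_Ioc_of_le hbinv1]
    refine Integrable.mono' (g := fun _ => ((b : ℝ) * (Φ c - Φ 0)) ^ α)
      (integrableOn_const measure_Ioc_lt_top.ne) hmeas.aestronglyMeasurable ?_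
    refine (ae_restrict_iff' measurableSet_Ioc).2 ?_
    filter_upwards [hae_diff] with t hdiff ht
    have ht' : t ∈ Set.Ioo (0 : ℝ) c := ⟨lt_trans hbinv ht.1, by linarith [ht.2]⟩
    have hd := hdiff ht'
    have h0 : 0 ≤ deriv Φ t := hderiv_nonneg ht' hd
    have hub : deriv Φ t ≤ (b : ℝ) * (Φ c - Φ 0) := by
      have h := hKey_le ⟨ht'.1.le, ht'.2.le⟩ ht'.2 hd
      have h2 : (Φ c - Φ t) / (c - t) ≤ (Φ c - Φ 0) / (1 / (b : ℝ)) := by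
        apply div_le_div₀ hK0 ?_ hbinv ?_
        · have := hΦ_mono h0mem ⟨ht'.1.le, ht'.2.le⟩ ht'.1.le
          linarith
        · rw [hc]; linarith [ht.2]
      rw [div_div_eq_mul_div, div_one] at h2
      calc deriv Φ t ≤ (Φ c - Φ t) / (c - t) := h
        _ ≤ (Φ c - Φ 0) * (b : ℝ) := h2
        _ = (b : ℝ) * (Φ c - Φ 0) := by ring
    rw [Real.norm_eq_abs, abs_of_nonneg (Real.rpow_nonneg h0 α)]
    exact Real.rpow_le_rpow h0 hub hα0.le
  -- integrability on [1, c]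
  have hint2 : IntervalIntegrable (fun t => deriv Φ t ^ α) volume 1 c := by
    rw [intervalIntegrable_iff_integrableOn_Ioc_of_le h1c.le,
      integrableOn_Ioc_iff_integrableOn_Ioo]
    refine Integrable.mono' (g := fun t => 1 + deriv Φ t)
      ((integrableOn_const measure_Ioo_lt_top.ne).add hderiv_int)
      hmeas.aestronglyMeasurable ?_
    refine (ae_restrict_iff' measurableSet_Ioo).2 ?_
    filter_upwards [hae_diff] with t hdiff ht
    have ht' : t ∈ Set.Ioo (0 : ℝ) c := ⟨by linarith [ht.1], ht.2⟩
    have h0 : 0 ≤ deriv Φ t := hderiv_nonneg ht' (hdiff ht')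
    rw [Real.norm_eq_abs, abs_of_nonneg (Real.rpow_nonneg h0 α)]
    rcases le_total (deriv Φ t) 1 with h | h
    · have := Real.rpow_le_one h0 h hα0.le
      linarith
    · have h2 : deriv Φ t ^ α ≤ deriv Φ t ^ (1 : ℝ) :=
        Real.rpow_le_rpow_of_exponent_le h hα1
      rw [Real.rpow_one] at h2
      linarith
  have hderiv_rpow_int : IntegrableOn (fun t => deriv Φ t ^ α) (Set.Ioo (1 : ℝ) c) := by
    have h := hint2
    rwa [intervalIntegrable_iff_integrableOn_Ioc_of_le h1c.le,
      integrableOn_Ioc_iff_integrableOn_Ioo] at h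
  -- splitting the integral
  have hsplit : (∫ t in (1 / (b : ℝ))..(1 : ℝ), deriv Φ t ^ α)
      + (∫ t in (1 : ℝ)..c, deriv Φ t ^ α)
      = ∫ t in (1 / (b : ℝ))..c, deriv Φ t ^ α :=
    intervalIntegral.integral_add_adjacent_intervals hint1 hint2
  have hpos1 : 0 ≤ ∫ t in (1 / (b : ℝ))..(1 : ℝ), deriv Φ t ^ α := by
    apply intervalIntegral.integral_nonneg_of_ae_restrict hbinv1
    refine (ae_restrict_iff' measurableSet_Icc).2 ?_
    filter_upwards [hae_diff] with t hdiff ht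
    have ht' : t ∈ Set.Ioo (0 : ℝ) c := ⟨lt_of_lt_of_le hbinv ht.1, by linarith [ht.2]⟩
    exact Real.rpow_nonneg (hderiv_nonneg ht' (hdiff ht')) α
  -- main estimate for y < x
  have main : ∀ x ∈ Set.Icc (0 : ℝ) 1, ∀ y ∈ Set.Icc (0 : ℝ) 1, y < x →
      |φ (g1 b (ψ x)) - φ (g1 b (ψ y))|
        ≤ H * (b : ℝ) ^ (α + 1) * (∫ t in (1 / (b : ℝ))..c, deriv Φ t ^ α)
          * (x - y) ^ α := by
    intro x hx y hy hyx
    set I : ℝ := ∫ t in (1 / (b : ℝ))..c, deriv Φ t ^ α with hI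
    set m : ℝ := (Φ x - Φ y) / (x - y) with hm
    have hxy0 : 0 < x - y := by linarith
    have hΦxy : Φ y ≤ Φ x := hΦ_mono (hsub01 hy) (hsub01 hx) hyx.le
    have hm0 : 0 ≤ m := div_nonneg (by linarith) hxy0.le
    -- a.e. lower bound on Ioo 1 c
    have hmle : ∀ᵐ t ∂(volume.restrict (Set.Ioo (1 : ℝ) c)),
        (fun _ => m ^ α) t ≤ (fun t => deriv Φ t ^ α) t := by
      refine (ae_restrict_iff' measurableSet_Ioo).2 ?_
      filter_upwards [hae_diff] with t hdiff ht
      have ht' : t ∈ Set.Ioo (0 : ℝ) c := ⟨by linarith [ht.1], ht.2⟩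
      have hd := hdiff ht'
      have hxt : x < t := lt_of_le_of_lt hx.2 ht.1
      have h1 : m ≤ (Φ t - Φ x) / (t - x) := by
        have h := hΦ_conv.slope_mono_adjacent (hsub01 hy) ⟨ht'.1.le, ht'.2.le⟩ hyx hxt
        rw [hm]
        exact h
      have h2 := hKey_ge (hsub01 hx) ⟨ht'.1.le, ht'.2.le⟩ hxt hd
      exact Real.rpow_le_rpow hm0 (by linarith) hα0.le
    have hlow : m ^ α * (c - 1) ≤ ∫ t in (1 : ℝ)..c, deriv Φ t ^ α := by
      rw [intervalIntegral.integral_of_le h1c.le, integral_Ioc_eq_integral_Ioo]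
      calc m ^ α * (c - 1) = ∫ _ in Set.Ioo (1 : ℝ) c, m ^ α := by
            rw [setIntegral_const, Real.volume_real_Ioo_of_le h1c.le,
              smul_eq_mul, mul_comm]
        _ ≤ ∫ t in Set.Ioo (1 : ℝ) c, deriv Φ t ^ α :=
            setIntegral_mono_ae_restrict
              (integrableOn_const measure_Ioo_lt_top.ne) hderiv_rpow_int hmle
    have hc1 : c - 1 = 1 / (b : ℝ) := by rw [hc]; ring
    have hmI : m ^ α ≤ (b : ℝ) * I := by
      have h2 : m ^ α * (1 / (b : ℝ)) ≤ I := by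
        rw [← hc1]
        calc m ^ α * (c - 1) ≤ ∫ t in (1 : ℝ)..c, deriv Φ t ^ α := hlow
          _ ≤ I := by rw [← hsplit]; linarith
      calc m ^ α = (b : ℝ) * (m ^ α * (1 / (b : ℝ))) := by field_simp
        _ ≤ (b : ℝ) * I := mul_le_mul_of_nonneg_left h2 hb0.le
    -- Hölder + Lipschitz
    have hpx := g1_mem_Icc b hb (hψ_mem x hx)
    have hpy := g1_mem_Icc b hb (hψ_mem y hy)
    have hHapp := hH _ hpx _ hpy
    have hlip := g1_lipschitz b hb (hψ_mem x hx) (hψ_mem y hy)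
    have hψdiff : |ψ x - ψ y| = m * (x - y) := by
      rw [← hΦ_ext x hx, ← hΦ_ext y hy, abs_of_nonneg (by linarith), hm]
      field_simp
    have hPbound : |g1 b (ψ x) - g1 b (ψ y)| ≤ (b : ℝ) * (m * (x - y)) := by
      rw [← hψdiff]; exact hlip
    have hPrpow : |g1 b (ψ x) - g1 b (ψ y)| ^ α ≤ (b : ℝ) ^ α * (m ^ α * (x - y) ^ α) := by
      calc |g1 b (ψ x) - g1 b (ψ y)| ^ α ≤ ((b : ℝ) * (m * (x - y))) ^ α :=
            Real.rpow_le_rpow (abs_nonneg _) hPbound hα0.le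
        _ = (b : ℝ) ^ α * (m * (x - y)) ^ α := Real.mul_rpow hb0.le (by positivity)
        _ = (b : ℝ) ^ α * (m ^ α * (x - y) ^ α) := by rw [Real.mul_rpow hm0 hxy0.le]
    have hfinal : |φ (g1 b (ψ x)) - φ (g1 b (ψ y))|
        ≤ H * ((b : ℝ) ^ α * (((b : ℝ) * I) * (x - y) ^ α)) := by
      refine le_trans hHapp (mul_le_mul_of_nonneg_left ?_ hH0)
      calc |g1 b (ψ x) - g1 b (ψ y)| ^ α ≤ (b : ℝ) ^ α * (m ^ α * (x - y) ^ α) := hPrpow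
        _ ≤ (b : ℝ) ^ α * (((b : ℝ) * I) * (x - y) ^ α) :=
            mul_le_mul_of_nonneg_left
              (mul_le_mul_of_nonneg_right hmI (Real.rpow_nonneg hxy0.le α))
              (Real.rpow_nonneg hb0.le α)
    calc |φ (g1 b (ψ x)) - φ (g1 b (ψ y))|
        ≤ H * ((b : ℝ) ^ α * (((b : ℝ) * I) * (x - y) ^ α)) := hfinal
      _ = H * (b : ℝ) ^ (α + 1) * I * (x - y) ^ α := by
          rw [Real.rpow_add_one (ne_of_gt hb0)]; ring
  intro x hx y hy
  rcases lt_trichotomy y x with h | h | h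
  · rw [abs_of_pos (sub_pos.2 h)]
    exact main x hx y hy h
  · subst h
    simp [Real.zero_rpow hα0.ne']
  · rw [abs_sub_comm (φ (g1 b (ψ x))) (φ (g1 b (ψ y))), abs_sub_comm x y,
      abs_of_pos (sub_pos.2 h)]
    exact main y hy x hx h
end

section
/- For every a ∈ (0,1) and every α ∈ (0,a] there exists a constant C(a,α) > 0, depending only on a and α, such that for every integer b ≥ 1 the α-Hölder seminorm of g_{a,b} on [0,1] satisfies [g_{a,b}]_{α,[0,1]} ≤ C(a,α)·b^{α+1}. -/
open Set MeasureTheory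

/-- `g_{a,b} = q_a ∘ g_{1,b} ∘ q_a⁻¹`, where `q_a x = x ^ a` (real power). -/
noncomputable def gab (a : ℝ) (b : ℕ) (x : ℝ) : ℝ := (g1 b (x ^ a⁻¹)) ^ a

private lemma g1_eq (b : ℕ) (x : ℝ) :
    g1 b x = if Even (min ⌊(b : ℝ) * x⌋ ((b : ℤ) - 1)) then
      (b : ℝ) * x - ((min ⌊(b : ℝ) * x⌋ ((b : ℤ) - 1) : ℤ) : ℝ)
    else ((min ⌊(b : ℝ) * x⌋ ((b : ℤ) - 1) : ℤ) : ℝ) + 1 - (b : ℝ) * x := rfl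

private lemma k_facts (b : ℕ) {x : ℝ} (hx : x ∈ Icc (0:ℝ) 1) :
    ((min ⌊(b : ℝ) * x⌋ ((b : ℤ) - 1) : ℤ) : ℝ) ≤ (b : ℝ) * x ∧
    (b : ℝ) * x ≤ ((min ⌊(b : ℝ) * x⌋ ((b : ℤ) - 1) : ℤ) : ℝ) + 1 := by
  have hmin : ((min ⌊(b : ℝ) * x⌋ ((b : ℤ) - 1) : ℤ) : ℝ) ≤ ((⌊(b : ℝ) * x⌋ : ℤ) : ℝ) := by
    exact_mod_cast min_le_left ⌊(b : ℝ) * x⌋ ((b : ℤ) - 1)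
  constructor
  · exact hmin.trans (Int.floor_le _)
  · rcases le_or_gt ⌊(b : ℝ) * x⌋ ((b : ℤ) - 1) with h | h
    · rw [min_eq_left h]
      exact (Int.lt_floor_add_one _).le
    · rw [min_eq_right h.le]
      push_cast
      nlinarith [hx.2, Nat.cast_nonneg (α := ℝ) b]

private lemma g1_nonneg (b : ℕ) {x : ℝ} (hx : x ∈ Icc (0:ℝ) 1) : 0 ≤ g1 b x := by
  obtain ⟨h1, h2⟩ := k_facts b hx
  rw [g1_eq]
  split <;> linarith

private lemma g1_lip_aux (b : ℕ) {u v : ℝ} (hu : u ∈ Icc (0:ℝ) 1) (hv : v ∈ Icc (0:ℝ) 1)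
    (huv : u ≤ v) : |g1 b u - g1 b v| ≤ (b : ℝ) * (v - u) := by
  obtain ⟨hK1, hK2⟩ := k_facts b hu
  obtain ⟨hL1, hL2⟩ := k_facts b hv
  rw [g1_eq b u, g1_eq b v]
  set K : ℤ := min ⌊(b : ℝ) * u⌋ ((b : ℤ) - 1) with hKdef
  set L : ℤ := min ⌊(b : ℝ) * v⌋ ((b : ℤ) - 1) with hLdef
  have hbuv : (b : ℝ) * u ≤ (b : ℝ) * v := mul_le_mul_of_nonneg_left huv (Nat.cast_nonneg b)
  have hKL : K ≤ L := min_le_min (Int.floor_le_floor hbuv) le_rfl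
  have hKLr : (K : ℝ) ≤ (L : ℝ) := by exact_mod_cast hKL
  rw [abs_le]
  by_cases hKe : Even K <;> by_cases hLe : Even L
  · rw [if_pos hKe, if_pos hLe]
    rcases eq_or_lt_of_le hKL with h | h
    · have hr : (K : ℝ) = (L : ℝ) := by exact_mod_cast h
      constructor <;> linarith
    · have hg : (K : ℝ) + 2 ≤ (L : ℝ) := by
        have : K + 2 ≤ L := by
          obtain ⟨m, hm⟩ := hKe; obtain ⟨n, hn⟩ := hLe; omega
        exact_mod_cast this
      constructor <;> linarith
  · rw [if_pos hKe, if_neg hLe]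
    have h : K + 1 ≤ L := by
      rcases eq_or_lt_of_le hKL with h | h
      · exfalso; rw [h] at hKe; exact hLe hKe
      · omega
    have hg : (K : ℝ) + 1 ≤ (L : ℝ) := by exact_mod_cast h
    constructor <;> linarith
  · rw [if_neg hKe, if_pos hLe]
    have h : K + 1 ≤ L := by
      rcases eq_or_lt_of_le hKL with h | h
      · exfalso; rw [h] at hKe; exact hKe hLe
      · omega
    have hg : (K : ℝ) + 1 ≤ (L : ℝ) := by exact_mod_cast h
    constructor <;> linarith
  · rw [if_neg hKe, if_neg hLe]
    rcases eq_or_lt_of_le hKL with h | h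
    · have hr : (K : ℝ) = (L : ℝ) := by exact_mod_cast h
      constructor <;> linarith
    · have hg : (K : ℝ) + 2 ≤ (L : ℝ) := by
        have : K + 2 ≤ L := by
          obtain ⟨m, hm⟩ := Int.not_even_iff_odd.mp hKe
          obtain ⟨n, hn⟩ := Int.not_even_iff_odd.mp hLe
          omega
        exact_mod_cast this
      constructor <;> linarith

private lemma g1_lip (b : ℕ) {u v : ℝ} (hu : u ∈ Icc (0:ℝ) 1) (hv : v ∈ Icc (0:ℝ) 1) :
    |g1 b u - g1 b v| ≤ (b : ℝ) * |u - v| := by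
  rcases le_total u v with h | h
  · rw [abs_sub_comm u v, abs_of_nonneg (by linarith : (0:ℝ) ≤ v - u)]
    exact g1_lip_aux b hu hv h
  · rw [abs_of_nonneg (by linarith : (0:ℝ) ≤ u - v), abs_sub_comm (g1 b u)]
    exact g1_lip_aux b hv hu h

private lemma rpow_subadd {p : ℝ} (hp : 0 ≤ p) (hp1 : p ≤ 1) {x y : ℝ} (hx : 0 ≤ x)
    (hy : 0 ≤ y) : (x + y) ^ p ≤ x ^ p + y ^ p := by
  have h := NNReal.coe_le_coe.2 (NNReal.rpow_add_le_add_rpow x.toNNReal y.toNNReal hp hp1)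
  simpa [NNReal.coe_rpow, Real.coe_toNNReal x hx, Real.coe_toNNReal y hy] using h

private lemma rpow_holder {p : ℝ} (hp : 0 < p) (hp1 : p ≤ 1) {x y : ℝ} (hx : 0 ≤ x)
    (hy : 0 ≤ y) : |x ^ p - y ^ p| ≤ |x - y| ^ p := by
  wlog h : y ≤ x generalizing x y
  · rw [abs_sub_comm, abs_sub_comm x y]
    exact this hy hx (le_of_not_ge h)
  have h1 : x ^ p ≤ (x - y) ^ p + y ^ p := by
    calc x ^ p = ((x - y) + y) ^ p := by ring_nf
    _ ≤ _ := rpow_subadd hp.le hp1 (by linarith) hy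
  have h2 : y ^ p ≤ x ^ p := Real.rpow_le_rpow hy h hp.le
  rw [abs_of_nonneg (by linarith : (0:ℝ) ≤ x ^ p - y ^ p),
    abs_of_nonneg (by linarith : (0:ℝ) ≤ x - y)]
  linarith

private lemma rpow_lip_aux {p : ℝ} (hp : 1 ≤ p) {x y : ℝ} (hy0 : 0 ≤ y) (hyx : y ≤ x)
    (hx1 : x ≤ 1) : x ^ p - y ^ p ≤ p * (x - y) := by
  have bound : ∀ t ∈ Ico y x, ‖p * t ^ (p - 1)‖ ≤ p := by
    intro t ht
    have ht0 : 0 ≤ t := le_trans hy0 ht.1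
    have ht1 : t ≤ 1 := le_of_lt (lt_of_lt_of_le ht.2 hx1)
    have hpow : t ^ (p - 1) ≤ 1 := Real.rpow_le_one ht0 ht1 (by linarith)
    have hpow0 : 0 ≤ t ^ (p - 1) := Real.rpow_nonneg ht0 _
    rw [Real.norm_eq_abs, abs_of_nonneg (by positivity)]
    nlinarith
  have key := norm_image_sub_le_of_norm_deriv_le_segment'
    (f := fun t : ℝ => t ^ p) (f' := fun t : ℝ => p * t ^ (p - 1))
    (fun t _ => (Real.hasDerivAt_rpow_const (Or.inr hp)).hasDerivWithinAt) bound x ⟨hyx, le_rfl⟩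
  simp only [Real.norm_eq_abs] at key
  calc x ^ p - y ^ p ≤ |x ^ p - y ^ p| := le_abs_self _
  _ ≤ p * (x - y) := key

private lemma rpow_lip {p : ℝ} (hp : 1 ≤ p) {x y : ℝ} (hx : x ∈ Icc (0:ℝ) 1)
    (hy : y ∈ Icc (0:ℝ) 1) : |x ^ p - y ^ p| ≤ p * |x - y| := by
  rcases le_total y x with h | h
  · rw [abs_of_nonneg (sub_nonneg.2 (Real.rpow_le_rpow hy.1 h (by linarith))),
      abs_of_nonneg (sub_nonneg.2 h)]
    exact rpow_lip_aux hp hy.1 h hx.2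
  · rw [abs_sub_comm, abs_sub_comm x y,
      abs_of_nonneg (sub_nonneg.2 (Real.rpow_le_rpow hx.1 h (by linarith))),
      abs_of_nonneg (sub_nonneg.2 h)]
    exact rpow_lip_aux hp hx.1 h hy.2

/-- For every `a ∈ (0,1)` and `α ∈ (0,a]` there is a constant `C(a,α) > 0`,
depending only on `a` and `α`, with `[g_{a,b}]_{α,[0,1]} ≤ C(a,α)·b^(α+1)` for
every integer `b ≥ 1`. -/
theorem gab_holder_bound (a : ℝ) (ha : a ∈ Set.Ioo (0 : ℝ) 1)
    (α : ℝ) (hα : α ∈ Set.Ioc (0 : ℝ) a) :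
    ∃ C > (0 : ℝ), ∀ b : ℕ, 1 ≤ b →
      ∀ x ∈ Set.Icc (0 : ℝ) 1, ∀ y ∈ Set.Icc (0 : ℝ) 1,
        |gab a b x - gab a b y| ≤ C * (b : ℝ) ^ (α + 1) * |x - y| ^ α := by
  obtain ⟨ha0, ha1⟩ := ha
  obtain ⟨hα0, hαa⟩ := hα
  have hainv : 1 ≤ a⁻¹ := (one_le_inv₀ ha0).2 ha1.le
  refine ⟨a⁻¹, inv_pos.2 ha0, ?_⟩
  intro b hb x hx y hy
  have hX : x ^ a⁻¹ ∈ Icc (0:ℝ) 1 :=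
    ⟨Real.rpow_nonneg hx.1 _, Real.rpow_le_one hx.1 hx.2 (by positivity)⟩
  have hY : y ^ a⁻¹ ∈ Icc (0:ℝ) 1 :=
    ⟨Real.rpow_nonneg hy.1 _, Real.rpow_le_one hy.1 hy.2 (by positivity)⟩
  have hd0 : (0:ℝ) ≤ |x - y| := abs_nonneg _
  have hd1 : |x - y| ≤ 1 := by
    rw [abs_le]; constructor <;> linarith [hx.1, hx.2, hy.1, hy.2]
  have hb1 : (1:ℝ) ≤ (b : ℝ) := by exact_mod_cast hb
  have h2 : |g1 b (x ^ a⁻¹) - g1 b (y ^ a⁻¹)| ≤ (b : ℝ) * |x ^ a⁻¹ - y ^ a⁻¹| := g1_lip b hX hY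
  have h3 : |x ^ a⁻¹ - y ^ a⁻¹| ≤ a⁻¹ * |x - y| := rpow_lip hainv hx hy
  have e1 : (b : ℝ) ^ a ≤ (b : ℝ) ^ (α + 1) :=
    Real.rpow_le_rpow_of_exponent_le hb1 (by linarith)
  have e2 : (a⁻¹) ^ a ≤ a⁻¹ := by
    calc (a⁻¹) ^ a ≤ (a⁻¹) ^ (1:ℝ) := Real.rpow_le_rpow_of_exponent_le hainv ha1.le
    _ = a⁻¹ := Real.rpow_one _
  have e3 : |x - y| ^ a ≤ |x - y| ^ α := Real.rpow_le_rpow_of_exponent_ge' hd0 hd1 hα0.le hαa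
  calc |gab a b x - gab a b y|
      ≤ |g1 b (x ^ a⁻¹) - g1 b (y ^ a⁻¹)| ^ a :=
        rpow_holder ha0 ha1.le (g1_nonneg b hX) (g1_nonneg b hY)
    _ ≤ ((b : ℝ) * (a⁻¹ * |x - y|)) ^ a := by
        apply Real.rpow_le_rpow (abs_nonneg _) _ ha0.le
        exact h2.trans (mul_le_mul_of_nonneg_left h3 (Nat.cast_nonneg b))
    _ = (b : ℝ) ^ a * ((a⁻¹) ^ a * |x - y| ^ a) := by
        rw [Real.mul_rpow (Nat.cast_nonneg b) (by positivity),
          Real.mul_rpow (by positivity) (abs_nonneg _)]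
    _ ≤ (b : ℝ) ^ (α + 1) * (a⁻¹ * |x - y| ^ α) := by
        apply mul_le_mul e1 (mul_le_mul e2 e3 (Real.rpow_nonneg hd0 _) (by positivity))
          (by positivity) (by positivity)
    _ = a⁻¹ * (b : ℝ) ^ (α + 1) * |x - y| ^ α := by ring
end

section
/- Let a ∈ (0,1) and let b ≥ 2 be an integer. Then: (i) for every α ∈ (a,1], the map g_{a,b} is not α-Hölder on [0,1], i.e. sup_{x≠y ∈ [0,1]} |g_{a,b}(x) − g_{a,b}(y)|/|x − y|^α = ∞; and (ii) for every p ≥ 1/(1−a), g_{a,b} is not in W^{1,p}: there is no g ∈ L^p([0,1]) with g_{a,b}(x) = ∫_0^x g(t) dt for all x ∈ [0,1]. -/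
open Set MeasureTheory
open scoped ENNReal

lemma g1_two_div (b : ℕ) (hb : 2 ≤ b) : g1 b (2 / (b:ℝ)) = 0 := by
  have hb0 : (b:ℝ) ≠ 0 := by positivity
  have hbt : (b:ℝ) * (2 / b) = 2 := by field_simp
  have h2 : ⌊(2:ℝ)⌋ = 2 := by norm_num
  unfold g1
  simp only [hbt, h2]
  rcases eq_or_lt_of_le hb with h | h
  · have h1 : min (2:ℤ) ((b:ℤ) - 1) = 1 := by omega
    rw [h1]; norm_num
  · have h1 : min (2:ℤ) ((b:ℤ) - 1) = 2 := by omega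
    rw [h1]; norm_num

lemma g1_left (b : ℕ) (hb : 2 ≤ b) (t : ℝ) (h1 : 1 / b ≤ t) (h2 : t < 2 / b) :
    g1 b t = 2 - b * t := by
  have hb0 : (0:ℝ) < b := by positivity
  have hbt1 : (1:ℝ) ≤ b * t := by rw [div_le_iff₀ hb0] at h1; linarith [h1]
  have hbt2 : (b:ℝ) * t < 2 := by rw [lt_div_iff₀ hb0] at h2; linarith [h2]
  have hfl : ⌊(b:ℝ) * t⌋ = 1 := by
    rw [Int.floor_eq_iff]
    constructor
    · exact_mod_cast hbt1
    · push_cast; linarith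
  have h1' : min (1:ℤ) ((b:ℤ) - 1) = 1 := by omega
  unfold g1
  simp only [hfl, h1']
  norm_num [Int.even_iff]

lemma gab_comp (a : ℝ) (ha : 0 < a) (b : ℕ) (t : ℝ) (ht : 0 ≤ t) :
    gab a b (t ^ a) = g1 b t ^ a := by
  unfold gab
  rw [← Real.rpow_mul ht, mul_inv_cancel₀ ha.ne', Real.rpow_one]

lemma incr_le (a : ℝ) (ha : 0 < a) (ha1 : a ≤ 1) (b : ℕ) (hb : 1 ≤ b)
    (v u : ℝ) (hv : 1 / b ≤ v) (hvu : v ≤ u) :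
    u ^ a - v ^ a ≤ b * (u - v) := by
  have hb0 : (0:ℝ) < b := by exact_mod_cast Nat.pos_of_ne_zero (by omega)
  have hv0 : 0 < v := lt_of_lt_of_le (by positivity) hv
  have hu0 : 0 < u := lt_of_lt_of_le hv0 hvu
  have hdiv : (1:ℝ) ≤ u / v := (one_le_div hv0).2 hvu
  have key : u ^ a ≤ v ^ (a - 1) * u := by
    have h1 : u ^ a = v ^ a * (u / v) ^ a := by
      rw [← Real.mul_rpow hv0.le (by positivity), mul_div_cancel₀ _ hv0.ne']
    have h2 : (u / v) ^ a ≤ u / v := by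
      calc (u / v) ^ a ≤ (u / v) ^ (1:ℝ) := Real.rpow_le_rpow_of_exponent_le hdiv ha1
      _ = u / v := Real.rpow_one _
    have h3 : v ^ a = v ^ (a - 1) * v := by
      rw [← Real.rpow_add_one hv0.ne']; ring_nf
    calc u ^ a = v ^ a * (u / v) ^ a := h1
      _ ≤ v ^ a * (u / v) := by
          exact mul_le_mul_of_nonneg_left h2 (Real.rpow_nonneg hv0.le _)
      _ = v ^ (a - 1) * u := by rw [h3]; field_simp
  have hva : v ^ (a - 1) ≤ b := by
    have e1 : v ^ (a - 1) = (v⁻¹) ^ (1 - a) := by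
      rw [show a - 1 = -(1 - a) by ring, Real.rpow_neg hv0.le, ← Real.inv_rpow hv0.le]
    have hvinv : v⁻¹ ≤ (b:ℝ) := by
      rw [inv_le_comm₀ hv0 hb0]
      rw [← one_div]; exact hv
    rw [e1]
    calc (v⁻¹) ^ (1 - a) ≤ (b:ℝ) ^ (1 - a) :=
          Real.rpow_le_rpow (inv_nonneg.2 hv0.le) hvinv (by linarith)
      _ ≤ (b:ℝ) ^ (1:ℝ) :=
          Real.rpow_le_rpow_of_exponent_le (by exact_mod_cast hb) (by linarith)
      _ = b := Real.rpow_one _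
  have hfin : u ^ a - v ^ a ≤ v ^ (a - 1) * (u - v) := by
    have h3 : v ^ a = v ^ (a - 1) * v := by
      rw [← Real.rpow_add_one hv0.ne']; ring_nf
    rw [h3]; nlinarith [key]
  calc u ^ a - v ^ a ≤ v ^ (a - 1) * (u - v) := hfin
    _ ≤ b * (u - v) := mul_le_mul_of_nonneg_right hva (by linarith)

lemma holder_part (a : ℝ) (ha : a ∈ Set.Ioo (0 : ℝ) 1) (b : ℕ) (hb : 2 ≤ b) :
    ∀ α ∈ Set.Ioc a 1,
      ¬ ∃ C : ℝ, ∀ x ∈ Set.Icc (0 : ℝ) 1, ∀ y ∈ Set.Icc (0 : ℝ) 1,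
        |gab a b x - gab a b y| ≤ C * |x - y| ^ α := by
  obtain ⟨ha0, ha1⟩ := ha
  rintro α ⟨hαa, hα1⟩ ⟨C, hC⟩
  have hb0 : (0:ℝ) < b := by positivity
  have hb1 : (2:ℝ) ≤ b := by exact_mod_cast hb
  set C' : ℝ := |C| + 1 with hC'def
  have hC'0 : 0 < C' := by positivity
  set β : ℝ := α - a with hβdef
  have hβ0 : 0 < β := by simp [hβdef]; linarith
  set r : ℝ := (C'⁻¹) ^ β⁻¹ with hrdef
  have hr0 : 0 < r := Real.rpow_pos_of_pos (by positivity) _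
  set s : ℝ := min 1 (r / 2) with hsdef
  have hs0 : 0 < s := lt_min one_pos (by positivity)
  have hs1 : s ≤ 1 := min_le_left _ _
  have hsr : s < r := lt_of_le_of_lt (min_le_right _ _) (by linarith)
  have hsβ : C' * s ^ β < 1 := by
    have h1 : s ^ β < r ^ β := Real.rpow_lt_rpow hs0.le hsr hβ0
    have h2 : r ^ β = C'⁻¹ := by
      rw [hrdef, ← Real.rpow_mul (by positivity), inv_mul_cancel₀ hβ0.ne', Real.rpow_one]
    have h3 : C' * s ^ β < C' * C'⁻¹ := by
      apply mul_lt_mul_of_pos_left _ hC'0; rw [← h2]; exact h1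
    rwa [mul_inv_cancel₀ hC'0.ne'] at h3
  set ε : ℝ := s / b with hεdef
  have hε0 : 0 < ε := by positivity
  set t : ℝ := 2 / b - ε with htdef
  have hεb : ε ≤ 1 / b := by rw [hεdef, div_le_div_iff₀ hb0 hb0]; nlinarith
  have ht1 : 1 / b ≤ t := by
    rw [htdef]
    have : (1:ℝ)/b + 1/b = 2/b := by ring
    linarith
  have ht2 : t < 2 / b := by rw [htdef]; linarith
  have ht0 : 0 ≤ t := le_trans (by positivity) ht1
  have h2b1 : (2:ℝ)/b ≤ 1 := by rw [div_le_one hb0]; exact hb1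
  set x : ℝ := t ^ a with hxdef
  set y : ℝ := (2/(b:ℝ)) ^ a with hydef
  have hx : x ∈ Set.Icc (0:ℝ) 1 :=
    ⟨Real.rpow_nonneg ht0 _, Real.rpow_le_one ht0 (le_trans ht2.le h2b1) ha0.le⟩
  have hy : y ∈ Set.Icc (0:ℝ) 1 :=
    ⟨Real.rpow_nonneg (by positivity) _, Real.rpow_le_one (by positivity) h2b1 ha0.le⟩
  have hbε : (b:ℝ) * ε = s := by rw [hεdef]; field_simp
  have h22 : (b:ℝ) * (2/(b:ℝ)) = 2 := by field_simp
  have hgx : gab a b x = s ^ a := by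
    rw [hxdef, gab_comp a ha0 b t ht0, g1_left b hb t ht1 ht2]
    have hbt : (b:ℝ) * t = 2 - s := by rw [htdef, mul_sub, hbε, h22]
    rw [hbt]; ring_nf
  have hgy : gab a b y = 0 := by
    rw [hydef, gab_comp a ha0 b _ (by positivity), g1_two_div b hb,
      Real.zero_rpow ha0.ne']
  have hxy0 : 0 ≤ y - x := by
    have := Real.rpow_le_rpow ht0 ht2.le ha0.le
    rw [hxdef, hydef]; linarith
  have hxys : y - x ≤ s := by
    have h := incr_le a ha0 ha1.le b (by omega) t (2/b) ht1 ht2.le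
    have h2 : (b:ℝ) * (2/b - t) = s := by
      have he : 2/(b:ℝ) - t = ε := by rw [htdef]; ring
      rw [he]; exact hbε
    rw [hxdef, hydef]; linarith
  have spec := hC x hx y hy
  rw [hgx, hgy, sub_zero, abs_of_pos (Real.rpow_pos_of_pos hs0 _),
    abs_sub_comm, abs_of_nonneg hxy0] at spec
  have hsa0 : 0 < s ^ a := Real.rpow_pos_of_pos hs0 _
  have c1 : C * (y - x) ^ α ≤ C' * (y - x) ^ α := by
    apply mul_le_mul_of_nonneg_right _ (Real.rpow_nonneg hxy0 _)
    rw [hC'def]; linarith [le_abs_self C]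
  have c2 : C' * (y - x) ^ α ≤ C' * s ^ α :=
    mul_le_mul_of_nonneg_left (Real.rpow_le_rpow hxy0 hxys (by linarith)) hC'0.le
  have c3 : s ^ α = s ^ β * s ^ a := by
    rw [← Real.rpow_add hs0, hβdef]; ring_nf
  have c4 : C' * (s ^ β * s ^ a) < s ^ a := by
    have := mul_lt_mul_of_pos_right hsβ hsa0
    nlinarith
  rw [c3] at c2
  linarith

lemma sobolev_part (a : ℝ) (ha : a ∈ Set.Ioo (0 : ℝ) 1) (b : ℕ) (hb : 2 ≤ b) :
    ∀ p : ℝ, (1 - a)⁻¹ ≤ p →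
      ¬ ∃ g : ℝ → ℝ,
        MemLp g (ENNReal.ofReal p) (volume.restrict (Set.Icc (0 : ℝ) 1)) ∧
        ∀ x ∈ Set.Icc (0 : ℝ) 1, gab a b x = ∫ t in (0 : ℝ)..x, g t := by
  obtain ⟨ha0, ha1⟩ := ha
  rintro p hp ⟨g, hg, hrepr⟩
  have h1a : 0 < 1 - a := by linarith
  have hp1 : 1 < p := by
    have h1 : (1 - a) * (1 - a)⁻¹ = 1 := mul_inv_cancel₀ h1a.ne'
    nlinarith [inv_pos.2 h1a, hp]
  have hp0 : 0 < p := by linarith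
  set P : ℝ≥0∞ := ENNReal.ofReal p with hPdef
  have hP1 : 1 ≤ P := by rw [hPdef]; exact ENNReal.one_le_ofReal.2 hp1.le
  have hPtop : P ≠ ⊤ := ENNReal.ofReal_ne_top
  have hP0 : P ≠ 0 := by positivity
  have hPto : P.toReal = p := ENNReal.toReal_ofReal hp0.le
  have hb0 : (0:ℝ) < b := by positivity
  have hb1 : (2:ℝ) ≤ b := by exact_mod_cast hb
  set ν := volume.restrict (Set.Icc (0:ℝ) 1) with hνdef
  haveI : IsFiniteMeasure ν := by
    constructor
    rw [hνdef, Measure.restrict_apply_univ]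
    exact measure_Icc_lt_top
  have hgint : IntegrableOn g (Set.Icc (0:ℝ) 1) volume := hg.integrable hP1
  -- the dyadic scales
  set d : ℕ → ℝ := fun n => (2:ℝ)⁻¹ ^ n with hddef
  have hd0 : ∀ n, 0 < d n := fun n => by positivity
  have hd1 : ∀ n, d n ≤ 1 := fun n => pow_le_one₀ (by norm_num) (by norm_num)
  have hdsucc : ∀ n, d (n + 1) = d n / 2 := fun n => by
    rw [hddef]; simp [pow_succ]; ring
  set t : ℕ → ℝ := fun n => (2 - d n) / b with htdef
  have ht_lb : ∀ n, 1 / b ≤ t n := fun n => by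
    rw [htdef, div_le_div_iff₀ hb0 hb0]
    nlinarith [hd1 n]
  have ht_ub : ∀ n, t n < 2 / b := fun n => by
    rw [htdef, div_lt_div_iff₀ hb0 hb0]
    nlinarith [hd0 n]
  have ht0 : ∀ n, 0 ≤ t n := fun n => le_trans (by positivity) (ht_lb n)
  have ht_mono : ∀ n, t n < t (n + 1) := fun n => by
    rw [htdef, div_lt_div_iff₀ hb0 hb0, hdsucc n]
    nlinarith [hd0 n]
  have h2b1 : (2:ℝ)/b ≤ 1 := by rw [div_le_one hb0]; exact hb1
  set u : ℕ → ℝ := fun n => t n ^ a with hudef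
  have hu_mono : ∀ n, u n < u (n + 1) := fun n =>
    Real.rpow_lt_rpow (ht0 n) (ht_mono n) ha0
  have humem : ∀ n, u n ∈ Set.Icc (0:ℝ) 1 := fun n =>
    ⟨Real.rpow_nonneg (ht0 n) _,
     Real.rpow_le_one (ht0 n) (le_trans (ht_ub n).le h2b1) ha0.le⟩
  have hbt : ∀ n, (b:ℝ) * t n = 2 - d n := fun n => by
    rw [htdef]; field_simp
  have hgab : ∀ n, gab a b (u n) = d n ^ a := fun n => by
    rw [hudef, gab_comp a ha0 b _ (ht0 n), g1_left b hb _ (ht_lb n) (ht_ub n), hbt n]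
    ring_nf
  set κ : ℝ := 1 - (2:ℝ)⁻¹ ^ a with hκdef
  have hκ0 : 0 < κ := by
    have := Real.rpow_lt_one (by norm_num : (0:ℝ) ≤ 2⁻¹) (by norm_num) ha0
    rw [hκdef]; linarith
  have hκ1 : κ ≤ 1 := by
    have := Real.rpow_nonneg (show (0:ℝ) ≤ 2⁻¹ by norm_num) a
    rw [hκdef]; linarith
  have hincr : ∀ n, gab a b (u n) - gab a b (u (n+1)) = κ * d n ^ a := fun n => by
    rw [hgab n, hgab (n+1), hdsucc n]
    have : (d n / 2) ^ a = d n ^ a * (2:ℝ)⁻¹ ^ a := by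
      rw [div_eq_mul_inv, Real.mul_rpow (hd0 n).le (by norm_num)]
    rw [this, hκdef]; ring
  have hlen : ∀ n, u (n+1) - u n ≤ d n := fun n => by
    have h := incr_le a ha0 ha1.le b (by omega) (t n) (t (n+1)) (ht_lb n) (ht_mono n).le
    have h2 : (b:ℝ) * (t (n+1) - t n) = d n / 2 := by
      rw [mul_sub, hbt n, hbt (n+1), hdsucc n]; ring
    rw [hudef]
    simp only
    nlinarith [hd0 n]
  have hlen0 : ∀ n, 0 ≤ u (n+1) - u n := fun n => (sub_nonneg.2 (hu_mono n).le)
  -- exponent e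
  set e : ℝ := 1 - 1/p with hedef
  have he0 : 0 ≤ e := by
    rw [hedef]
    have : 1/p ≤ 1 := by rw [div_le_one hp0]; exact hp1.le
    linarith
  have hea : a ≤ e := by
    have h1 : p⁻¹ ≤ 1 - a := by
      have := inv_anti₀ (by positivity : (0:ℝ) < (1-a)⁻¹) hp
      rwa [inv_inv] at this
    rw [hedef, one_div]; linarith
  -- per-interval lower bound on the Lp norm
  have key : ∀ n, ENNReal.ofReal κ ≤ eLpNorm g P (volume.restrict (Set.Ioc (u n) (u (n+1)))) := by
    intro n
    set μn := volume.restrict (Set.Ioc (u n) (u (n+1))) with hμdef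
    have hsub : Set.Ioc (u n) (u (n+1)) ⊆ Set.Icc (0:ℝ) 1 := fun x hx =>
      ⟨le_trans (humem n).1 hx.1.le, le_trans hx.2 (humem (n+1)).2⟩
    have hle : μn ≤ ν := Measure.restrict_mono hsub le_rfl
    have hmeas : AEStronglyMeasurable g μn := hg.1.mono_measure hle
    have hgintn : Integrable g μn := by
      have : IntegrableOn g (Set.Ioc (u n) (u (n+1))) volume := hgint.mono_set hsub
      exact this
    have hSfin : eLpNorm g P μn ≠ ⊤ :=
      (lt_of_le_of_lt (eLpNorm_mono_measure g hle) hg.2).ne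
    -- the increment equals the integral over Ioc
    have hii : ∀ m, IntervalIntegrable g volume 0 (u m) := fun m => by
      apply IntegrableOn.intervalIntegrable
      rw [Set.uIcc_of_le (humem m).1]
      exact hgint.mono_set (Set.Icc_subset_Icc le_rfl (humem m).2)
    have hiin : IntervalIntegrable g volume (u n) (u (n+1)) := by
      apply IntegrableOn.intervalIntegrable
      rw [Set.uIcc_of_le (hu_mono n).le]
      exact hgint.mono_set (fun x hx => ⟨le_trans (humem n).1 hx.1, le_trans hx.2 (humem (n+1)).2⟩)
    have hadd := intervalIntegral.integral_add_adjacent_intervals (hii n) hiin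
    have hint_eq : ∫ x in Set.Ioc (u n) (u (n+1)), g x =
        gab a b (u (n+1)) - gab a b (u n) := by
      rw [← intervalIntegral.integral_of_le (hu_mono n).le,
        hrepr (u n) (humem n), hrepr (u (n+1)) (humem (n+1)), ← hadd]
      ring
    have habs : κ * d n ^ a ≤ ∫ x in Set.Ioc (u n) (u (n+1)), ‖g x‖ := by
      calc κ * d n ^ a = |∫ x in Set.Ioc (u n) (u (n+1)), g x| := by
            rw [hint_eq, abs_sub_comm, hincr n, abs_of_pos]
            positivity
        _ ≤ ∫ x in Set.Ioc (u n) (u (n+1)), ‖g x‖ := by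
            exact norm_integral_le_integral_norm g
    -- Hölder
    have hholder := eLpNorm_le_eLpNorm_mul_rpow_measure_univ (p := 1) (q := P) hP1 hmeas
    have hexp : 1 / (1:ℝ≥0∞).toReal - 1 / P.toReal = e := by
      rw [ENNReal.toReal_one, hPto, hedef]; ring
    rw [hexp] at hholder
    have hμuniv : μn Set.univ = ENNReal.ofReal (u (n+1) - u n) := by
      rw [hμdef, Measure.restrict_apply_univ, Real.volume_Ioc]
    have hone : eLpNorm g 1 μn = ENNReal.ofReal (∫ x in Set.Ioc (u n) (u (n+1)), ‖g x‖) := by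
      rw [eLpNorm_one_eq_lintegral_enorm, ← ofReal_integral_norm_eq_lintegral_enorm hgintn]
    have hRfin : eLpNorm g P μn * μn Set.univ ^ e ≠ ⊤ := by
      apply ENNReal.mul_ne_top hSfin
      rw [hμuniv]
      exact ENNReal.rpow_ne_top_of_nonneg he0 ENNReal.ofReal_ne_top
    have hreal : κ * d n ^ a ≤ (eLpNorm g P μn).toReal * (u (n+1) - u n) ^ e := by
      have h1 := ENNReal.toReal_mono hRfin hholder
      rw [hone, ENNReal.toReal_ofReal (by positivity), hμuniv, ENNReal.toReal_mul,
        ← ENNReal.toReal_rpow, ENNReal.toReal_ofReal (hlen0 n)] at h1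
      exact le_trans habs h1
    have hLe : (u (n+1) - u n) ^ e ≤ d n ^ a := by
      calc (u (n+1) - u n) ^ e ≤ d n ^ e :=
            Real.rpow_le_rpow (hlen0 n) (hlen n) he0
        _ ≤ d n ^ a := Real.rpow_le_rpow_of_exponent_ge (hd0 n) (hd1 n) hea
    have hκle : κ ≤ (eLpNorm g P μn).toReal := by
      have hda : 0 < d n ^ a := Real.rpow_pos_of_pos (hd0 n) _
      have h2 : κ * d n ^ a ≤ (eLpNorm g P μn).toReal * d n ^ a := by
        calc κ * d n ^ a ≤ (eLpNorm g P μn).toReal * (u (n+1) - u n) ^ e := hreal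
          _ ≤ (eLpNorm g P μn).toReal * d n ^ a :=
              mul_le_mul_of_nonneg_left hLe ENNReal.toReal_nonneg
      exact le_of_mul_le_mul_right h2 hda
    exact ENNReal.ofReal_le_of_le_toReal hκle
  -- turn into lower bound on the lintegral of ‖g‖^p
  set F : ℝ → ℝ≥0∞ := fun x => (‖g x‖₊ : ℝ≥0∞) ^ p with hFdef
  set c0 : ℝ≥0∞ := ENNReal.ofReal κ ^ p with hc0def
  have hc0 : 0 < c0 := ENNReal.rpow_pos (ENNReal.ofReal_pos.2 hκ0) ENNReal.ofReal_ne_top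
  have hc0top : c0 ≠ ⊤ := by
    rw [hc0def]
    exact ENNReal.rpow_ne_top_of_nonneg hp0.le ENNReal.ofReal_ne_top
  have keyn : ∀ n, c0 ≤ ∫⁻ x in Set.Ioc (u n) (u (n+1)), F x := by
    intro n
    have h1 := ENNReal.rpow_le_rpow (key n) hp0.le
    rwa [eLpNorm_eq_lintegral_rpow_enorm_toReal hP0 hPtop, hPto, ← ENNReal.rpow_mul,
      one_div, inv_mul_cancel₀ hp0.ne', ENNReal.rpow_one] at h1
  set M : ℝ≥0∞ := ∫⁻ x in Set.Icc (0:ℝ) 1, F x with hMdef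
  have hMfin : M ≠ ⊤ := by
    have h1 := hg.2
    rw [eLpNorm_eq_lintegral_rpow_enorm_toReal hP0 hPtop, hPto] at h1
    have h2 := ENNReal.rpow_lt_top_of_nonneg hp0.le h1.ne
    rw [← ENNReal.rpow_mul, one_div, inv_mul_cancel₀ hp0.ne', ENNReal.rpow_one] at h2
    exact h2.ne
  have humono : Monotone u := monotone_nat_of_le_succ (fun n => (hu_mono n).le)
  have hsum : ∀ N : ℕ, (N : ℝ≥0∞) * c0 ≤ M := by
    intro N
    have hdisj : Set.PairwiseDisjoint ↑(Finset.range N)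
        (fun n => Set.Ioc (u n) (u (n+1))) :=
      (humono.pairwise_disjoint_on_Ioc_succ).set_pairwise _
    have hmeas' : ∀ i ∈ Finset.range N, MeasurableSet (Set.Ioc (u i) (u (i+1))) :=
      fun i _ => measurableSet_Ioc
    have h1 : ∑ n ∈ Finset.range N, ∫⁻ x in Set.Ioc (u n) (u (n+1)), F x =
        ∫⁻ x in ⋃ n ∈ Finset.range N, Set.Ioc (u n) (u (n+1)), F x :=
      (lintegral_biUnion_finset hdisj hmeas' F).symm
    have hsub : (⋃ n ∈ Finset.range N, Set.Ioc (u n) (u (n+1))) ⊆ Set.Icc (0:ℝ) 1 := by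
      intro x hx
      simp only [Set.mem_iUnion] at hx
      obtain ⟨i, _, hi⟩ := hx
      exact ⟨le_trans (humem i).1 hi.1.le, le_trans hi.2 (humem (i+1)).2⟩
    calc (N : ℝ≥0∞) * c0 = ∑ _n ∈ Finset.range N, c0 := by
          rw [Finset.sum_const, Finset.card_range, nsmul_eq_mul]
      _ ≤ ∑ n ∈ Finset.range N, ∫⁻ x in Set.Ioc (u n) (u (n+1)), F x :=
          Finset.sum_le_sum (fun n _ => keyn n)
      _ = ∫⁻ x in ⋃ n ∈ Finset.range N, Set.Ioc (u n) (u (n+1)), F x := h1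
      _ ≤ M := lintegral_mono_set hsub
  -- contradiction
  obtain ⟨N, hN⟩ := ENNReal.exists_nat_gt (ENNReal.div_lt_top hMfin hc0.ne').ne
  have hMlt : M < (N : ℝ≥0∞) * c0 := by
    rw [← ENNReal.div_lt_iff (Or.inl hc0.ne') (Or.inl hc0top)]
    exact hN
  exact absurd (hsum N) (not_le.2 hMlt)

/-- For `a ∈ (0,1)` and integer `b ≥ 2`: (i) `g_{a,b}` is not `α`-Hölder on `[0,1]`
for any `α ∈ (a,1]`; (ii) `g_{a,b}` is not in `W^{1,p}` for any `p ≥ 1/(1-a)`. -/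
theorem gab_sharp_regularity (a : ℝ) (ha : a ∈ Set.Ioo (0 : ℝ) 1)
    (b : ℕ) (hb : 2 ≤ b) :
    (∀ α ∈ Set.Ioc a 1,
      ¬ ∃ C : ℝ, ∀ x ∈ Set.Icc (0 : ℝ) 1, ∀ y ∈ Set.Icc (0 : ℝ) 1,
        |gab a b x - gab a b y| ≤ C * |x - y| ^ α) ∧
    ∀ p : ℝ, (1 - a)⁻¹ ≤ p →
      ¬ ∃ g : ℝ → ℝ,
        MemLp g (ENNReal.ofReal p) (volume.restrict (Set.Icc (0 : ℝ) 1)) ∧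
        ∀ x ∈ Set.Icc (0 : ℝ) 1, gab a b x = ∫ t in (0 : ℝ)..x, g t :=
  ⟨holder_part a ha b hb, sobolev_part a ha b hb⟩
end

section
/- There exists a continuous map f : [0,1] → [0,1] that satisfies the little Zygmund condition and has infinite topological entropy: h_top(f) = +∞. -/
open Set Topology Filter

namespace LZ

noncomputable section

open Real

def A (k : ℕ) : ℝ := 1 / (k + 1)
def B (k : ℕ) : ℝ := 1 / k
def L (k : ℕ) : ℝ := B k - A k
def c (k : ℕ) : ℝ := (2 * k + 1) * π / (2 * L k)
def φ (k : ℕ) (x : ℝ) : ℝ := A k + L k * Real.sin (c k * (x - A k)) ^ 2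

def f (x : ℝ) : ℝ := if x ≤ 0 then 0 else φ ⌊1 / x⌋₊ x

lemma A_pos (k : ℕ) : 0 < A k := by
  have : (0:ℝ) < (k:ℝ) + 1 := by positivity
  exact one_div_pos.2 this

lemma B_pos {k : ℕ} (hk : 1 ≤ k) : 0 < B k := by
  have : (0:ℝ) < (k:ℝ) := by exact_mod_cast hk
  exact one_div_pos.2 this

lemma A_lt_B {k : ℕ} (hk : 1 ≤ k) : A k < B k := by
  have h0 : (0:ℝ) < (k:ℝ) := by exact_mod_cast hk
  exact one_div_lt_one_div_of_lt h0 (by linarith)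

lemma L_pos {k : ℕ} (hk : 1 ≤ k) : 0 < L k := sub_pos.2 (A_lt_B hk)

lemma B_le_one {k : ℕ} (hk : 1 ≤ k) : B k ≤ 1 := by
  have h1 : (1:ℝ) ≤ (k:ℝ) := by exact_mod_cast hk
  rw [B, div_le_one (by linarith)]; linarith

lemma A_add_L (k : ℕ) : A k + L k = B k := by rw [L]; ring

/-- Lap endpoints -/
def p (k m : ℕ) : ℝ := A k + m * L k / (2 * k + 1)

lemma c_mul_p {k : ℕ} (hk : 1 ≤ k) (m : ℕ) : c k * (p k m - A k) = m * (π / 2) := by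
  have hL : L k ≠ 0 := (L_pos hk).ne'
  have hN : (2 * (k:ℝ) + 1) ≠ 0 := by positivity
  rw [c, p]
  field_simp
  ring

lemma phi_p {k : ℕ} (hk : 1 ≤ k) (m : ℕ) :
    φ k (p k m) = A k + L k * (1 / 2 - (-1) ^ m / 2) := by
  have h := c_mul_p hk m
  rw [φ, h]
  have hsq : Real.sin ((m:ℝ) * (π / 2)) ^ 2 = 1 / 2 - Real.cos ((m:ℝ) * π) / 2 := by
    have h2 : 2 * ((m:ℝ) * (π / 2)) = (m:ℝ) * π := by ring
    rw [Real.sin_sq, Real.cos_sq, h2]; ring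
  have hcos : Real.cos ((m:ℝ) * π) = (-1) ^ m := by
    have := Real.cos_nat_mul_pi_sub 0 m
    simpa using this
  rw [hsq, hcos]

lemma phi_p_even {k : ℕ} (hk : 1 ≤ k) {m : ℕ} (hm : Even m) : φ k (p k m) = A k := by
  rw [phi_p hk m, hm.neg_one_pow]; ring

lemma phi_p_odd {k : ℕ} (hk : 1 ≤ k) {m : ℕ} (hm : Odd m) : φ k (p k m) = B k := by
  rw [phi_p hk m, hm.neg_one_pow, ← A_add_L]; ring

lemma p_zero (k : ℕ) : p k 0 = A k := by simp [p]

lemma p_top {k : ℕ} (hk : 1 ≤ k) : p k (2 * k + 1) = B k := by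
  have hN : (2 * (k:ℝ) + 1) ≠ 0 := by positivity
  rw [p, ← A_add_L]
  have : ((2 * k + 1 : ℕ) : ℝ) = 2 * (k:ℝ) + 1 := by push_cast; ring
  rw [this]
  field_simp

lemma phi_A {k : ℕ} (hk : 1 ≤ k) : φ k (A k) = A k := by
  have := phi_p_even hk (m := 0) (Even.zero)
  rwa [p_zero] at this

lemma phi_B {k : ℕ} (hk : 1 ≤ k) : φ k (B k) = B k := by
  have := phi_p_odd hk (m := 2 * k + 1) ⟨k, by ring⟩
  rwa [p_top hk] at this

lemma phi_mem {k : ℕ} (hk : 1 ≤ k) (x : ℝ) : φ k x ∈ Icc (A k) (B k) := by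
  have hL := L_pos hk
  have hs : Real.sin (c k * (x - A k)) ^ 2 ∈ Icc (0:ℝ) 1 :=
    ⟨sq_nonneg _, by
      rw [← Real.sin_sq_add_cos_sq (c k * (x - A k))]; nlinarith [sq_nonneg (Real.cos (c k * (x - A k)))]⟩
  constructor
  · rw [φ]; nlinarith [hs.1]
  · rw [φ, ← A_add_L]; nlinarith [hs.2]

lemma A_mono {k : ℕ} : A (k+1) < A k := by
  have : (0:ℝ) < (k:ℝ) + 1 := by positivity
  exact one_div_lt_one_div_of_lt this (by push_cast; linarith)

lemma B_succ (k : ℕ) : B (k+1) = A k := by rw [B, A]; push_cast; ring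

/-- identification of f with φ k on I_k -/
lemma f_eq_phi {k : ℕ} (hk : 1 ≤ k) {x : ℝ} (hx : x ∈ Icc (A k) (B k)) : f x = φ k x := by
  rcases eq_or_lt_of_le hx.1 with h | h
  · -- x = A k : f x = φ (k+1) x = A k = φ k x
    subst h
    have hx0 : ¬ (A k ≤ 0) := not_le.2 (A_pos k)
    have h1A : 1 / A k = ((k + 1 : ℕ) : ℝ) := by rw [A, one_div_one_div]; push_cast; ring
    rw [f, if_neg hx0, h1A, Nat.floor_natCast]
    have : A k = B (k+1) := (B_succ k).symm
    rw [this, phi_B (by omega), ← this, phi_A hk]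
  · -- A k < x ≤ B k : floor (1/x) = k
    have hx0 : 0 < x := lt_trans (A_pos k) h
    have hkk : (0:ℝ) < (k:ℝ) := by exact_mod_cast hk
    have h1 : (k:ℝ) ≤ 1 / x := by
      rw [le_div_iff₀ hx0]
      calc (k:ℝ) * x ≤ (k:ℝ) * B k := by nlinarith [hx.2]
      _ = 1 := by rw [B]; field_simp
    have h2 : 1 / x < (k:ℝ) + 1 := by
      rw [div_lt_iff₀ hx0]
      have : A k * ((k:ℝ) + 1) = 1 := by rw [A]; field_simp
      nlinarith
    have hfloor : ⌊1 / x⌋₊ = k := by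
      rw [Nat.floor_eq_iff (by positivity)]
      exact ⟨h1, by push_cast; linarith⟩
    rw [f, if_neg (not_le.2 hx0), hfloor]


def D (k : ℕ) (x : ℝ) : ℝ :=
  L k * (2 * Real.sin (c k * (x - A k)) * Real.cos (c k * (x - A k)) * c k)

lemma continuous_phi (k : ℕ) : Continuous (φ k) := by
  unfold φ; fun_prop

lemma hasDerivAt_phi (k : ℕ) (x : ℝ) : HasDerivAt (φ k) (D k x) x := by
  have h1 : HasDerivAt (fun y : ℝ => c k * (y - A k)) (c k) x := by
    simpa using ((hasDerivAt_id x).sub_const (A k)).const_mul (c k)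
  have h2 : HasDerivAt (fun y : ℝ => Real.sin (c k * (y - A k)))
      (Real.cos (c k * (x - A k)) * c k) x :=
    h1.sin
  have h3 := h2.pow 2
  have h4 := (h3.const_mul (L k)).const_add (A k)
  refine h4.congr_deriv ?_
  unfold D; push_cast; ring

lemma D_A (k : ℕ) : D k (A k) = 0 := by simp [D]

lemma D_B {k : ℕ} (hk : 1 ≤ k) : D k (B k) = 0 := by
  have hBp : B k = p k (2 * k + 1) := (p_top hk).symm
  have hθ : c k * (B k - A k) = ((2 * k + 1 : ℕ) : ℝ) * (π / 2) := by
    rw [hBp]; exact c_mul_p hk _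
  have hcos : Real.cos (c k * (B k - A k)) = 0 := by
    rw [hθ]
    apply Real.cos_eq_zero_iff.2
    exact ⟨(k : ℤ), by push_cast; ring⟩
  rw [D, hcos]; ring

/-- f is differentiable at every point of (0,1). -/
lemma f_diff {x : ℝ} (hx : x ∈ Ioo (0:ℝ) 1) : ∃ d, HasDerivAt f d x := by
  obtain ⟨hx0, hx1⟩ := hx
  set k := ⌊1 / x⌋₊ with hkdef
  have hinv1 : 1 < 1 / x := (one_lt_one_div hx0 hx1)
  have hk1 : 1 ≤ k := by
    rw [hkdef]
    exact Nat.le_floor (by exact_mod_cast hinv1.le)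
  have hkx : (k : ℝ) ≤ 1 / x := Nat.floor_le (by positivity)
  have hxk : 1 / x < (k : ℝ) + 1 := by
    rw [hkdef]; exact_mod_cast Nat.lt_floor_add_one (1 / x)
  have hkpos : (0:ℝ) < k := by exact_mod_cast hk1
  have hxB : x ≤ B k := by
    rw [B, le_div_iff₀ hkpos]
    calc x * k = (k : ℝ) * x := by ring
    _ ≤ (1 / x) * x := by nlinarith
    _ = 1 := by field_simp
  have hxA : A k < x := by
    rw [A, div_lt_iff₀ (by positivity)]
    have : (1 / x) * x = 1 := by field_simp
    nlinarith
  rcases lt_or_eq_of_le hxB with hlt | heq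
  · -- interior of I_k
    refine ⟨D k x, ?_⟩
    have hmem : Ioo (A k) (B k) ∈ nhds x := Ioo_mem_nhds hxA hlt
    have heq : f =ᶠ[nhds x] φ k :=
      Filter.eventuallyEq_of_mem hmem (fun y hy => f_eq_phi hk1 (Ioo_subset_Icc_self hy))
    exact (hasDerivAt_phi k x).congr_of_eventuallyEq heq
  · -- junction point x = B k, with k ≥ 2 since x < 1
    have hk2 : 2 ≤ k := by
      by_contra h
      have hk1' : k = 1 := by omega
      rw [hk1'] at heq
      simp [B] at heq
      exact absurd heq (ne_of_lt hx1)
    have hk11 : 1 ≤ k - 1 := by omega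
    have hsucc : k - 1 + 1 = k := by omega
    have hxA' : x = A (k - 1) := by rw [heq, ← B_succ (k-1), hsucc]
    have hxB' : x < B (k - 1) := by rw [hxA']; exact A_lt_B hk11
    refine ⟨0, ?_⟩
    have hLft : HasDerivWithinAt f 0 (Icc (A k) x) x := by
      have h1 : HasDerivWithinAt (φ k) 0 (Icc (A k) x) x := by
        have h0 : D k x = 0 := by rw [heq]; exact D_B hk1
        exact h0 ▸ (hasDerivAt_phi k x).hasDerivWithinAt
      exact h1.congr (fun y hy => f_eq_phi hk1 (by rw [← heq]; exact hy))
        (f_eq_phi hk1 (by rw [← heq]; exact ⟨hxA.le, le_rfl⟩))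
    have hRgt : HasDerivWithinAt f 0 (Icc x (B (k-1))) x := by
      have h1 : HasDerivWithinAt (φ (k-1)) 0 (Icc x (B (k-1))) x := by
        have h0 : D (k-1) x = 0 := by rw [hxA']; exact D_A (k-1)
        exact h0 ▸ (hasDerivAt_phi (k-1) x).hasDerivWithinAt
      exact h1.congr (fun y hy => f_eq_phi hk11 ⟨by rw [← hxA']; exact hy.1, hy.2⟩)
        (f_eq_phi hk11 ⟨le_of_eq hxA'.symm, hxB'.le⟩)
    have huni := hLft.union hRgt
    rw [Icc_union_Icc_eq_Icc hxA.le hxB'.le] at huni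
    exact huni.hasDerivAt (Icc_mem_nhds hxA hxB')

/-- f is between 0 and 2x on [0,1] -/
lemma f_bounds {x : ℝ} (hx : x ∈ Icc (0:ℝ) 1) : f x ∈ Icc (0:ℝ) (2 * x) := by
  rcases eq_or_lt_of_le hx.1 with h0 | h0
  · simp [f, ← h0]
  · set k := ⌊1 / x⌋₊ with hkdef
    have hk1 : 1 ≤ k := Nat.le_floor (by
      rw [Nat.cast_one, le_div_iff₀ h0]; linarith [hx.2])
    have hxk : 1 / x < (k : ℝ) + 1 := by
      rw [hkdef]; exact_mod_cast Nat.lt_floor_add_one (1 / x)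
    have hfx : f x = φ k x := by rw [f, if_neg (not_le.2 h0)]
    have hmem := phi_mem hk1 x
    have hkpos : (0:ℝ) < k := by exact_mod_cast hk1
    constructor
    · rw [hfx]; exact le_trans (A_pos k).le hmem.1
    · rw [hfx]
      have h1 : φ k x ≤ B k := hmem.2
      have h2 : B k ≤ 2 * A k := by
        have hp : (0:ℝ) < (k:ℝ) + 1 := by positivity
        rw [B, A, mul_one_div, div_le_div_iff₀ hkpos hp]
        have hone : (1:ℝ) ≤ (k:ℝ) := by exact_mod_cast hk1
        linarith
      have h3 : A k < x := by
        rw [A, div_lt_iff₀ (by positivity)]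
        have hxx : (1 / x) * x = 1 := by field_simp
        nlinarith
      linarith

lemma f_zero : f 0 = 0 := by simp [f]

lemma f_mapsTo : Set.MapsTo f (Icc (0:ℝ) 1) (Icc (0:ℝ) 1) := by
  intro x hx
  rcases eq_or_lt_of_le hx.1 with h0 | h0
  · simp [f, ← h0]
  · set k := ⌊1 / x⌋₊ with hkdef
    have hk1 : 1 ≤ k := Nat.le_floor (by
      rw [Nat.cast_one, le_div_iff₀ h0]; linarith [hx.2])
    have hfx : f x = φ k x := by rw [f, if_neg (not_le.2 h0)]
    have hmem := phi_mem hk1 x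
    exact ⟨le_trans (A_pos k).le (hfx ▸ hmem.1),
      le_trans (hfx ▸ hmem.2) (B_le_one hk1)⟩

lemma f_continuousOn : ContinuousOn f (Icc (0:ℝ) 1) := by
  intro x hx
  rcases eq_or_lt_of_le hx.1 with h0 | h0
  · rw [← h0]
    have key : ∀ y ∈ Icc (0:ℝ) 1, f y ∈ Icc (0:ℝ) (2 * y) := fun y hy => f_bounds hy
    have h00 : ContinuousWithinAt f (Icc (0:ℝ) 1) 0 := by
      rw [ContinuousWithinAt, f_zero]
      apply squeeze_zero' (t₀ := 𝓝[Icc (0:ℝ) 1] 0) (g := fun y => 2 * y)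
      · exact Filter.eventually_of_mem self_mem_nhdsWithin (fun y hy => (key y hy).1)
      · exact Filter.eventually_of_mem self_mem_nhdsWithin (fun y hy => (key y hy).2)
      · exact tendsto_nhdsWithin_of_tendsto_nhds
          (by simpa using (continuous_mul_left (2:ℝ)).tendsto (0:ℝ))
    exact h00
  · rcases eq_or_lt_of_le hx.2 with h1 | h1
    · subst h1
      have hmem : Icc (A 1) (B 1) ∈ 𝓝[Icc (0:ℝ) 1] 1 := by
        apply mem_nhdsWithin.2
        refine ⟨Ioi (A 1), isOpen_Ioi, by norm_num [A], ?_⟩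
        intro y hy
        have hB1 : B 1 = 1 := by norm_num [B]
        exact ⟨hy.1.le, by rw [hB1]; exact hy.2.2⟩
      have heq : f =ᶠ[𝓝[Icc (0:ℝ) 1] 1] φ 1 :=
        Filter.eventuallyEq_of_mem hmem (fun y hy => f_eq_phi le_rfl hy)
      have hfx : f 1 = φ 1 1 := f_eq_phi le_rfl (by constructor <;> norm_num [A, B])
      exact (((continuous_phi 1).continuousAt).continuousWithinAt).congr_of_eventuallyEq heq hfx
    · obtain ⟨d, hd⟩ := f_diff ⟨h0, h1⟩
      exact hd.continuousAt.continuousWithinAt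

/-- the little Zygmund condition -/
lemma f_zygmund : ∀ x ∈ Set.Ioo (0:ℝ) 1, ∀ ε > (0:ℝ), ∃ δ > (0:ℝ),
    ∀ t ∈ Set.Ioo (0:ℝ) δ, x + t ∈ Set.Icc (0:ℝ) 1 →
      x - t ∈ Set.Icc (0:ℝ) 1 →
        |f (x + t) + f (x - t) - 2 * f x| ≤ ε * t := by
  intro x hx ε hε
  obtain ⟨d, hd⟩ := f_diff hx
  have hlo := hd.isLittleO
  rw [Asymptotics.isLittleO_iff] at hlo
  have h2 := hlo (c := ε / 2) (by positivity)
  rw [Metric.eventually_nhds_iff] at h2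
  obtain ⟨δ, hδ, hball⟩ := h2
  refine ⟨δ, hδ, fun t ht _ _ => ?_⟩
  have hd1 : dist (x + t) x < δ := by
    rw [Real.dist_eq]
    have : x + t - x = t := by ring
    rw [this, abs_of_pos ht.1]; exact ht.2
  have hd2 : dist (x - t) x < δ := by
    rw [Real.dist_eq]
    have : x - t - x = -t := by ring
    rw [this, abs_neg, abs_of_pos ht.1]; exact ht.2
  have ht1 := hball hd1
  have ht2 := hball hd2
  simp only [Real.norm_eq_abs, smul_eq_mul] at ht1 ht2
  have e1 : x + t - x = t := by ring
  have e2 : x - t - x = -t := by ring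
  rw [e1, abs_of_pos ht.1] at ht1
  rw [e2, abs_neg, abs_of_pos ht.1] at ht2
  have hsplit : f (x + t) + f (x - t) - 2 * f x
      = (f (x + t) - f x - t * d) + (f (x - t) - f x - (-t) * d) := by ring
  rw [hsplit]
  calc |f (x + t) - f x - t * d + (f (x - t) - f x - -t * d)|
      ≤ |f (x + t) - f x - t * d| + |f (x - t) - f x - -t * d| := abs_add_le _ _
  _ ≤ ε / 2 * t + ε / 2 * t := add_le_add ht1 ht2
  _ = ε * t := by ring


/-! ### Entropy part -/

lemma p_mono {k : ℕ} (hk : 1 ≤ k) {m m' : ℕ} (h : m ≤ m') : p k m ≤ p k m' := by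
  have hL := L_pos hk
  have hN : (0:ℝ) < 2 * (k:ℝ) + 1 := by positivity
  rw [p, p]
  have hmm : (m:ℝ) ≤ (m':ℝ) := by exact_mod_cast h
  have h1 : (m:ℝ) * L k ≤ (m':ℝ) * L k := mul_le_mul_of_nonneg_right hmm hL.le
  have h2 : (m:ℝ) * L k / (2 * (k:ℝ) + 1) ≤ (m':ℝ) * L k / (2 * (k:ℝ) + 1) := by
    gcongr
  linarith

lemma p_mem {k : ℕ} (hk : 1 ≤ k) {m : ℕ} (hm : m ≤ 2 * k + 1) : p k m ∈ Icc (A k) (B k) := by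
  constructor
  · have := p_mono hk (Nat.zero_le m); rwa [p_zero] at this
  · have := p_mono hk hm; rwa [p_top hk] at this

/-- surjectivity of each lap -/
lemma lapSurj {k m : ℕ} (hk : 1 ≤ k) (hm : m + 1 ≤ 2 * k + 1) {y : ℝ}
    (hy : y ∈ Icc (A k) (B k)) :
    ∃ x, x ∈ Icc (p k m) (p k (m + 1)) ∧ φ k x = y := by
  have hcont : ContinuousOn (φ k) (uIcc (p k m) (p k (m + 1))) :=
    (continuous_phi k).continuousOn
  have hIVT := intermediate_value_uIcc hcont
  have hval : y ∈ uIcc (φ k (p k m)) (φ k (p k (m + 1))) := by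
    rcases Nat.even_or_odd m with he | ho
    · rw [phi_p_even hk he, phi_p_odd hk (he.add_one), uIcc_of_le (A_lt_B hk).le]
      exact hy
    · rw [phi_p_odd hk ho, phi_p_even hk (Odd.add_one ho), uIcc_comm,
        uIcc_of_le (A_lt_B hk).le]
      exact hy
  obtain ⟨x, hx, hfx⟩ := hIVT hval
  rw [uIcc_of_le (p_mono hk (Nat.le_succ m))] at hx
  exact ⟨x, hx, hfx⟩

/-- choice of inverse branch -/
def g (k m : ℕ) (y : ℝ) : ℝ :=
  if h : 1 ≤ k ∧ m + 1 ≤ 2 * k + 1 ∧ y ∈ Icc (A k) (B k) then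
    (lapSurj h.1 h.2.1 h.2.2).choose else 0

lemma g_spec {k m : ℕ} (hk : 1 ≤ k) (hm : m + 1 ≤ 2 * k + 1) {y : ℝ}
    (hy : y ∈ Icc (A k) (B k)) :
    g k m y ∈ Icc (p k m) (p k (m + 1)) ∧ φ k (g k m y) = y := by
  rw [g, dif_pos ⟨hk, hm, hy⟩]
  exact (lapSurj hk hm hy).choose_spec

/-- itinerary points -/
def T (k : ℕ) : List ℕ → ℝ
  | [] => A k
  | i :: l => g k (2 * i) (T k l)

lemma T_mem {k : ℕ} (hk : 1 ≤ k) {l : List ℕ} (hl : ∀ i ∈ l, i ≤ k) :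
    T k l ∈ Icc (A k) (B k) := by
  induction l with
  | nil => exact ⟨le_rfl, (A_lt_B hk).le⟩
  | cons i l ih =>
    have hi : i ≤ k := hl i List.mem_cons_self
    have hT := ih (fun j hj => hl j (List.mem_cons_of_mem i hj))
    have hm : 2 * i + 1 ≤ 2 * k + 1 := by omega
    have hg := (g_spec hk hm hT).1
    rw [T]
    constructor
    · exact le_trans (p_mem hk (by omega)).1 hg.1
    · exact le_trans hg.2 (p_mem hk (by omega)).2

lemma f_T_cons {k : ℕ} (hk : 1 ≤ k) {i : ℕ} (hi : i ≤ k) {l : List ℕ}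
    (hl : ∀ j ∈ l, j ≤ k) : f (T k (i :: l)) = T k l := by
  have hT := T_mem hk hl
  have hm : 2 * i + 1 ≤ 2 * k + 1 := by omega
  have hg := g_spec hk hm hT
  have hgmem : g k (2 * i) (T k l) ∈ Icc (A k) (B k) :=
    ⟨le_trans (p_mem hk (by omega)).1 hg.1.1, le_trans hg.1.2 (p_mem hk (by omega)).2⟩
  rw [T]
  rw [f_eq_phi hk hgmem, hg.2]

lemma T_orbit {k : ℕ} (hk : 1 ≤ k) (l : List ℕ) (hl : ∀ i ∈ l, i ≤ k) :
    ∀ j, (hj : j < l.length) →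
      f^[j] (T k l) ∈ Icc (p k (2 * l.get ⟨j, hj⟩)) (p k (2 * l.get ⟨j, hj⟩ + 1)) := by
  induction l with
  | nil => intro j hj; simp at hj
  | cons i l ih =>
    intro j hj
    have hi : i ≤ k := hl i List.mem_cons_self
    have hl' : ∀ j ∈ l, j ≤ k := fun j hj => hl j (List.mem_cons_of_mem i hj)
    cases j with
    | zero =>
      simp only [Function.iterate_zero, id_eq, List.get]
      have hT := T_mem hk hl'
      have hm : 2 * i + 1 ≤ 2 * k + 1 := by omega
      exact (g_spec hk hm hT).1
    | succ j =>
      rw [Function.iterate_succ_apply, f_T_cons hk hi hl']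
      have hj' : j < l.length := by simpa using hj
      exact ih hl' j hj'


lemma p_succ {k : ℕ} (hk : 1 ≤ k) (m : ℕ) :
    p k (m + 1) = p k m + L k / (2 * (k:ℝ) + 1) := by
  rw [p, p]; push_cast; ring

lemma lap_sep {k : ℕ} (hk : 1 ≤ k) {i i' : ℕ} (hii : i < i')
    {u v : ℝ} (hu : u ∈ Icc (p k (2*i)) (p k (2*i+1)))
    (hv : v ∈ Icc (p k (2*i')) (p k (2*i'+1))) :
    L k / (2 * (k:ℝ) + 1) ≤ v - u := by
  have h1 : u ≤ p k (2*i+1) := hu.2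
  have h2 : p k (2*i') ≤ v := hv.1
  have h3 : p k (2*i+2) ≤ p k (2*i') := p_mono hk (by omega)
  have h4 := p_succ hk (2*i+1)
  have : 2*i+1+1 = 2*i+2 := by omega
  rw [this] at h4
  linarith

/-- the entourage used for the entropy lower bound -/
def U (k : ℕ) : Set (ℝ × ℝ) := {q : ℝ × ℝ | dist q.1 q.2 < L k / (2 * (2 * (k:ℝ) + 1))}

lemma net_exists {k : ℕ} (hk : 1 ≤ k) (n : ℕ) :
    ∃ S : Finset ℝ, Dynamics.IsDynNetIn f (Icc (0:ℝ) 1) (U k) n (S : Set ℝ)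
      ∧ S.card = (k+1)^n := by
  classical
  set Ψ : (Fin n → Fin (k+1)) → ℝ :=
    fun w => T k (List.ofFn (fun j => ((w j : ℕ)))) with hΨ
  have hlst : ∀ w : Fin n → Fin (k+1), ∀ i ∈ List.ofFn (fun j => ((w j : ℕ))), i ≤ k := by
    intro w i hi
    rw [List.mem_ofFn] at hi
    obtain ⟨j, rfl⟩ := hi
    exact Nat.lt_succ_iff.mp (w j).isLt
  have hmemI : ∀ w, Ψ w ∈ Icc (A k) (B k) := fun w => T_mem hk (hlst w)
  -- orbit in laps
  have horb : ∀ (w : Fin n → Fin (k+1)) (j : Fin n),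
      f^[(j:ℕ)] (Ψ w) ∈ Icc (p k (2 * (w j : ℕ))) (p k (2 * (w j : ℕ) + 1)) := by
    intro w j
    have hlen : (List.ofFn (fun j => ((w j : ℕ)))).length = n := List.length_ofFn
    have hj : (j : ℕ) < (List.ofFn (fun j => ((w j : ℕ)))).length := by rw [hlen]; exact j.isLt
    have := T_orbit hk _ (hlst w) (j : ℕ) hj
    rwa [List.get_ofFn, Fin.cast_mk] at this
  have hLpos := L_pos hk
  have hNpos : (0:ℝ) < 2 * (k:ℝ) + 1 := by positivity
  have hspos : (0:ℝ) < L k / (2 * (k:ℝ) + 1) := by positivity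
  have hsep : ∀ w w' : Fin n → Fin (k+1), w ≠ w' →
      ∃ j : Fin n, L k / (2 * (k:ℝ) + 1) ≤ |f^[(j:ℕ)] (Ψ w) - f^[(j:ℕ)] (Ψ w')| := by
    intro w w' hww
    obtain ⟨j, hj⟩ := Function.ne_iff.1 hww
    refine ⟨j, ?_⟩
    have h1 := horb w j
    have h2 := horb w' j
    rcases lt_or_gt_of_ne (fun h : (w j : ℕ) = (w' j : ℕ) => hj (Fin.ext h)) with hlt | hgt
    · rw [abs_sub_comm, abs_of_nonneg (by linarith [lap_sep hk hlt h1 h2])]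
      exact lap_sep hk hlt h1 h2
    · rw [abs_of_nonneg (by linarith [lap_sep hk hgt h2 h1])]
      exact lap_sep hk hgt h2 h1
  have hinj : Function.Injective Ψ := by
    intro w w' h
    by_contra hww
    obtain ⟨j, hjsep⟩ := hsep w w' hww
    rw [h, sub_self, abs_zero] at hjsep
    linarith
  refine ⟨Finset.image Ψ Finset.univ, ⟨?_, ?_⟩, ?_⟩
  · -- subset
    intro x hx
    simp only [Finset.coe_image, Finset.coe_univ, Set.image_univ, Set.mem_range] at hx
    obtain ⟨w, rfl⟩ := hx
    exact ⟨le_trans (A_pos k).le (hmemI w).1, le_trans (hmemI w).2 (B_le_one hk)⟩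
  · -- pairwise disjoint balls
    intro x hx y hy hxy
    simp only [Finset.coe_image, Finset.coe_univ, Set.image_univ, Set.mem_range] at hx hy
    obtain ⟨w, rfl⟩ := hx
    obtain ⟨w', rfl⟩ := hy
    have hww : w ≠ w' := fun h => hxy (by rw [h])
    obtain ⟨j, hjsep⟩ := hsep w w' hww
    simp only [Function.onFun]
    rw [Set.disjoint_left]
    intro z hzx hzy
    rw [Dynamics.mem_ball_dynEntourage] at hzx hzy
    have hx' := hzx (j : ℕ) j.isLt
    have hy' := hzy (j : ℕ) j.isLt
    have hdx : dist (f^[(j:ℕ)] (Ψ w)) (f^[(j:ℕ)] z) < L k / (2 * (2 * (k:ℝ) + 1)) := hx'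
    have hdy : dist (f^[(j:ℕ)] (Ψ w')) (f^[(j:ℕ)] z) < L k / (2 * (2 * (k:ℝ) + 1)) := hy'
    have htri : |f^[(j:ℕ)] (Ψ w) - f^[(j:ℕ)] (Ψ w')| < L k / (2 * (k:ℝ) + 1) := by
      have hd := dist_triangle (f^[(j:ℕ)] (Ψ w)) (f^[(j:ℕ)] z) (f^[(j:ℕ)] (Ψ w'))
      have heq : dist (f^[(j:ℕ)] (Ψ w)) (f^[(j:ℕ)] (Ψ w'))
          = |f^[(j:ℕ)] (Ψ w) - f^[(j:ℕ)] (Ψ w')| := Real.dist_eq _ _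
      rw [heq] at hd
      calc |f^[(j:ℕ)] (Ψ w) - f^[(j:ℕ)] (Ψ w')| ≤ _ := hd
      _ < L k / (2 * (2 * (k:ℝ) + 1)) + L k / (2 * (2 * (k:ℝ) + 1)) :=
          add_lt_add hdx (by rwa [dist_comm] at hdy)
      _ = L k / (2 * (k:ℝ) + 1) := by
          rw [← add_div, div_eq_div_iff (by positivity) (by positivity)]; ring
    linarith
  · rw [Finset.card_image_of_injective _ hinj, Finset.card_univ]
    simp [Nat.pow_succ]


open Dynamics ENNReal EReal Filter in
lemma log_le_coverEntropy {k : ℕ} (hk : 1 ≤ k) :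
    ENNReal.log (((k:ℝ≥0∞) + 1)) ≤ Dynamics.coverEntropy f (Icc (0:ℝ) 1) := by
  have hLpos := L_pos hk
  have hU : U k ∈ uniformity ℝ := by
    have : (0:ℝ) < L k / (2 * (2 * (k:ℝ) + 1)) := by positivity
    exact Metric.dist_mem_uniformity this
  refine le_trans ?_ (Dynamics.netEntropyEntourage_le_coverEntropy f (Icc (0:ℝ) 1) hU)
  rw [Dynamics.netEntropyEntourage]
  apply le_limsup_of_frequently_le'
  apply Filter.Eventually.frequently
  filter_upwards [Filter.eventually_ge_atTop 1] with n hn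
  obtain ⟨S, hnet, hcard⟩ := net_exists hk n
  have hle : (((k+1)^n : ℕ) : ℕ∞) ≤ netMaxcard f (Icc (0:ℝ) 1) (U k) n := by
    have := hnet.card_le_netMaxcard
    rwa [hcard] at this
  have hle' : (((k:ℝ≥0∞) + 1) ^ n) ≤ (netMaxcard f (Icc (0:ℝ) 1) (U k) n : ℝ≥0∞) := by
    have := ENat.toENNReal_le.2 hle
    calc ((k:ℝ≥0∞) + 1) ^ n = (((k+1)^n : ℕ) : ℝ≥0∞) := by push_cast; ring
    _ ≤ _ := by exact_mod_cast this
  have hlog := ENNReal.log_monotone hle'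
  rw [ENNReal.log_pow] at hlog
  rw [EReal.le_div_iff_mul_le (by exact_mod_cast Nat.pos_of_ne_zero (by omega))
    (EReal.natCast_ne_top n)]
  calc ENNReal.log ((k:ℝ≥0∞) + 1) * (n : EReal)
      = (n : EReal) * ENNReal.log ((k:ℝ≥0∞) + 1) := mul_comm _ _
  _ ≤ _ := hlog

open Dynamics ENNReal in
lemma coverEntropy_f_top : Dynamics.coverEntropy f (Icc (0:ℝ) 1) = ⊤ := by
  rw [EReal.eq_top_iff_forall_lt]
  intro y
  set k : ℕ := ⌈Real.exp y⌉₊ + 1 with hkdef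
  have hk : 1 ≤ k := by omega
  have hklog : y < Real.log ((k:ℝ) + 1) := by
    have he : Real.exp y ≤ (⌈Real.exp y⌉₊ : ℝ) := Nat.le_ceil _
    have hlt : Real.exp y < (k:ℝ) + 1 := by
      rw [hkdef]; push_cast; linarith
    have hpos : (0:ℝ) < (k:ℝ) + 1 := by positivity
    exact (Real.lt_log_iff_exp_lt hpos).2 hlt
  have hlogeq : ENNReal.log ((k:ℝ≥0∞) + 1) = ((Real.log ((k:ℝ) + 1) : ℝ) : EReal) := by
    have h0 : ((k:ℝ≥0∞) + 1) ≠ 0 := by simp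
    have ht : ((k:ℝ≥0∞) + 1) ≠ ⊤ := by
      simp [ENNReal.add_ne_top, ENNReal.natCast_ne_top]
    rw [ENNReal.log, if_neg h0, if_neg ht]
    have htr : ((k:ℝ≥0∞) + 1).toReal = (k:ℝ) + 1 := by
      rw [ENNReal.toReal_add (ENNReal.natCast_ne_top k) ENNReal.one_ne_top]
      simp
    rw [htr]
  calc (y : EReal) < ((Real.log ((k:ℝ) + 1) : ℝ) : EReal) := by exact_mod_cast hklog
  _ = ENNReal.log ((k:ℝ≥0∞) + 1) := hlogeq.symm
  _ ≤ _ := log_le_coverEntropy hk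

end

end LZ

/-- There is a continuous self-map of `[0,1]` satisfying the little Zygmund
condition and having infinite topological entropy. -/
theorem exists_little_zygmund_infinite_entropy :
    ∃ f : ℝ → ℝ,
      Set.MapsTo f (Set.Icc (0 : ℝ) 1) (Set.Icc (0 : ℝ) 1) ∧
      ContinuousOn f (Set.Icc (0 : ℝ) 1) ∧
      (∀ x ∈ Set.Ioo (0 : ℝ) 1, ∀ ε > (0 : ℝ), ∃ δ > (0 : ℝ),
        ∀ t ∈ Set.Ioo (0 : ℝ) δ, x + t ∈ Set.Icc (0 : ℝ) 1 →
          x - t ∈ Set.Icc (0 : ℝ) 1 →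
            |f (x + t) + f (x - t) - 2 * f x| ≤ ε * t) ∧
      Dynamics.coverEntropy f (Set.Icc (0 : ℝ) 1) = ⊤ :=
  ⟨LZ.f, LZ.f_mapsTo, LZ.f_continuousOn, LZ.f_zygmund, LZ.coverEntropy_f_top⟩
end
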